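/- arXiv:1208.5978 — 5 statements merged into one kernel-verified Lean document; each statement's English description precedes it below -/
import Mathlib

section
/- Let k ≥ 1 and 1 ≤ ℓ ≤ k, let H = {H_n}_{n≥1} be a hypergraph sequence of k-uniform hypergraphs with |V(H_n)| = n, and for each n let P_n ⊆ V(H_n)^k. If dev_{ℓ, P_n}(H_n) = o(n^{k+ℓ}), then dev_{ℓ−1, P_n}(H_n) = o(n^{k+ℓ−1}). -/
open Filter Finset Asymptotics

/-- A hypergraph sequence: for each `n`, the edge set of a hypergraph
on the vertex set `Fin n`. -/
abbrev HSeq : Type := (n : ℕ) → Finset (Finset (Fin n))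

/-- The sequence is `k`-uniform: every edge has exactly `k` vertices. -/
def UniformSeq (k : ℕ) (H : HSeq) : Prop :=
  ∀ n : ℕ, ∀ e ∈ H n, e.card = k

/-- A proper partition of `k`: an (ordered list representing an unordered) collection of
at least two positive integers summing to `k`. -/
def ProperPartition (k : ℕ) (π : List ℕ) : Prop :=
  2 ≤ π.length ∧ (∀ m ∈ π, 0 < m) ∧ π.sum = k

/-- `π'` is a refinement of `π`: there is a surjection `φ` from the parts of `π'`
to the parts of `π` so that each part of `π` is the sum of its `φ`-preimages. -/
def IsRefinement (π' π : List ℕ) : Prop :=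
  ∃ φ : Fin π'.length → Fin π.length, Function.Surjective φ ∧
    ∀ i : Fin π.length, π.get i = ∑ j ∈ Finset.univ.filter (fun j => φ j = i), π'.get j

/-- `e(S_1, …, S_t)`: the number of tuples `(s_1, …, s_t) ∈ S_1 × ⋯ × S_t` whose
union is an edge of `H`. -/
def eCount {n : ℕ} (H : Finset (Finset (Fin n))) {t : ℕ}
    (S : Fin t → Finset (Finset (Fin n))) : ℕ :=
  ((Fintype.piFinset S).filter (fun s => Finset.univ.biUnion s ∈ H)).card

/-- The property `Expand_p(π)` of a hypergraph sequence. -/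
def Expand (k : ℕ) (p : ℝ) (π : List ℕ) (H : HSeq) : Prop :=
  ∃ f : ℕ → ℝ, f =o[atTop] (fun n => (n : ℝ) ^ k) ∧
    ∀ n : ℕ, ∀ S : Fin π.length → Finset (Finset (Fin n)),
      (∀ i : Fin π.length, ∀ s ∈ S i, s.card = π.get i) →
      |(eCount (H n) S : ℝ) - p * ∏ i : Fin π.length, ((S i).card : ℝ)| ≤ f n

/-- The property `PartiteExpand_p(π)`: the `Expand` estimate is only required when the
vertex sets `V(S_i)` are pairwise disjoint. -/
def PartiteExpand (k : ℕ) (p : ℝ) (π : List ℕ) (H : HSeq) : Prop :=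
  ∃ f : ℕ → ℝ, f =o[atTop] (fun n => (n : ℝ) ^ k) ∧
    ∀ n : ℕ, ∀ S : Fin π.length → Finset (Finset (Fin n)),
      (∀ i : Fin π.length, ∀ s ∈ S i, s.card = π.get i) →
      (∀ i j : Fin π.length, i ≠ j →
        Disjoint ((S i).biUnion id) ((S j).biUnion id)) →
      |(eCount (H n) S : ℝ) - p * ∏ i : Fin π.length, ((S i).card : ℝ)| ≤ f n

/-- `K_k(G)`: the `k`-element vertex subsets all of whose `ℓ`-element subsets are
edges of the `ℓ`-uniform hypergraph `G`. -/
def cliqueSet (k ℓ : ℕ) {n : ℕ} (G : Finset (Finset (Fin n))) : Finset (Finset (Fin n)) :=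
  (Finset.powersetCard k (Finset.univ : Finset (Fin n))).filter
    (fun T => ∀ S ∈ Finset.powersetCard ℓ T, S ∈ G)

/-- The property `CD_p(ℓ)` of a hypergraph sequence. -/
def CD (k : ℕ) (p : ℝ) (ℓ : ℕ) (H : HSeq) : Prop :=
  ∃ f : ℕ → ℝ, f =o[atTop] (fun n => (n : ℝ) ^ k) ∧
    ∀ n : ℕ, ∀ G : Finset (Finset (Fin n)), (∀ e ∈ G, e.card = ℓ) →
      |(((cliqueSet k ℓ G) ∩ H n).card : ℝ) - p * ((cliqueSet k ℓ G).card : ℝ)| ≤ f n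

/-- The property `CD_p(ℓ,s)` of a hypergraph sequence: `G` ranges over `ℓ`-uniform
hypergraphs whose vertex set `W` is a subset of `Fin n`, and one counts `k`-sets
inducing at least `s` edges of `G`. -/
def CDs (k : ℕ) (p : ℝ) (ℓ s : ℕ) (H : HSeq) : Prop :=
  ∃ f : ℕ → ℝ, f =o[atTop] (fun n => (n : ℝ) ^ k) ∧
    ∀ n : ℕ, ∀ W : Finset (Fin n), ∀ G : Finset (Finset (Fin n)),
      (∀ e ∈ G, e.card = ℓ ∧ e ⊆ W) →
      |(((H n).filter (fun T => s ≤ (G.filter (fun e => e ⊆ T)).card)).card : ℝ) -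
        p * (((Finset.powersetCard k W).filter
          (fun T => s ≤ (G.filter (fun e => e ⊆ T)).card)).card : ℝ)| ≤ f n

/-- The `k`-tuple `(x_1, …, x_{k-ℓ}, y_{1,ε_1}, …, y_{ℓ,ε_ℓ})`. -/
def octTuple {n : ℕ} (k ℓ : ℕ) (x : Fin (k - ℓ) → Fin n) (y : Fin ℓ × Fin 2 → Fin n)
    (ε : Fin ℓ → Fin 2) (i : Fin k) : Fin n :=
  if h : (i : ℕ) < k - ℓ then x ⟨(i : ℕ), h⟩
  else
    have hi : (i : ℕ) - (k - ℓ) < ℓ := by have := i.isLt; omega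
    y (⟨(i : ℕ) - (k - ℓ), hi⟩, ε ⟨(i : ℕ) - (k - ℓ), hi⟩)

/-- The squashed octahedron `O[x⃗, y⃗]`: the collection of `k`-element sets of the form
`{x_1, …, x_{k-ℓ}, y_{1,i_1}, …, y_{ℓ,i_ℓ}}`. -/
def octSet {n : ℕ} (k ℓ : ℕ) (x : Fin (k - ℓ) → Fin n)
    (y : Fin ℓ × Fin 2 → Fin n) : Finset (Finset (Fin n)) :=
  (Finset.image (fun ε : Fin ℓ → Fin 2 =>
    Finset.image (octTuple k ℓ x y ε) Finset.univ) Finset.univ).filter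
    (fun T => T.card = k)

/-- `Σ (−1)^{|O[x⃗,y⃗] ∩ E(H)|}` over all choices of vertices. -/
noncomputable def devSum (k ℓ : ℕ) {n : ℕ} (H : Finset (Finset (Fin n))) : ℝ :=
  ∑ x : Fin (k - ℓ) → Fin n, ∑ y : Fin ℓ × Fin 2 → Fin n,
    (-1 : ℝ) ^ ((octSet k ℓ x y ∩ H).card)

/-- The property `Dev(ℓ)` of a hypergraph sequence. -/
def Dev (k ℓ : ℕ) (H : HSeq) : Prop :=
  (fun n => devSum k ℓ (H n)) =o[atTop] (fun n => (n : ℝ) ^ (k + ℓ))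

open scoped Classical in
/-- `dev_{ℓ,P}(H)`: the deviation sum restricted to octahedra all of whose `k`-tuples
lie in `P`. -/
noncomputable def devP (k ℓ : ℕ) {n : ℕ} (H : Finset (Finset (Fin n)))
    (P : Set (Fin k → Fin n)) : ℝ :=
  ∑ x : Fin (k - ℓ) → Fin n, ∑ y : Fin ℓ × Fin 2 → Fin n,
    if ∀ ε : Fin ℓ → Fin 2, octTuple k ℓ x y ε ∈ P then
      (-1 : ℝ) ^ ((octSet k ℓ x y ∩ H).card)
    else 0

/-- `Q ⊆ V(H)^k` is complete in coordinate `i`: membership in `Q` only depends on the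
coordinates other than `i`. -/
def CompleteInCoord {n k : ℕ} (Q : Set (Fin k → Fin n)) (i : Fin k) : Prop :=
  ∃ Q' : Set ({j : Fin k // j ≠ i} → Fin n),
    Q = {z : Fin k → Fin n | (fun j : {j : Fin k // j ≠ i} => z j.1) ∈ Q'}

/-! Write `dev_{ℓ-1}` as a sum over `(x_1, …, x_{k-ℓ}; y)` of line sums over the remaining
coordinate `x_{k-ℓ+1} = w`. By Cauchy–Schwarz, `dev_{ℓ-1}^2` is at most `n^{k+ℓ-2}` times the
sum of the squared line sums. In the square, the product of the terms at `w₀` and `w₁` is the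
`dev_ℓ` term of the octahedron whose new pair is `(w₀, w₁)`, since the two `(ℓ-1)`-octahedra
share no `k`-set unless `w₁` is one of the at most `k + ℓ - 1` vertices of the first. Hence
`dev_{ℓ-1}^2 ≤ n^{k+ℓ-2} (dev_ℓ + O(n^{k+ℓ-1})) = o(n^{2(k+ℓ-1)})`. -/

lemma isLittleO_of_sq_le_mul {α : Type*} {L : Filter α} {f g u v w : α → ℝ}
    (hfg : ∀ x, f x ^ 2 ≤ u x * g x) (hu : ∀ x, 0 ≤ u x) (huv : ∀ x, u x * |v x| = w x ^ 2)
    (hg : g =o[L] v) : f =o[L] w := by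
  refine isLittleO_iff.2 fun c hc => ?_
  filter_upwards [hg.def (pow_pos hc 2)] with x hx
  rw [Real.norm_eq_abs, Real.norm_eq_abs] at hx ⊢
  have : f x ^ 2 ≤ (c * |w x|) ^ 2 :=
    calc f x ^ 2 ≤ u x * g x := hfg x
      _ ≤ u x * (c ^ 2 * |v x|) := mul_le_mul_of_nonneg_left ((le_abs_self _).trans hx) (hu x)
      _ = (c * |w x|) ^ 2 := by rw [mul_left_comm, huv, mul_pow, sq_abs]
  exact abs_le_of_sq_le_sq this (by positivity)

open scoped Classical in
noncomputable def octTerm (k l : ℕ) {n : ℕ} (H : Finset (Finset (Fin n)))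
    (P : Set (Fin k → Fin n)) (x : Fin (k - l) → Fin n) (y : Fin l × Fin 2 → Fin n) : ℝ :=
  if ∀ ε : Fin l → Fin 2, octTuple k l x y ε ∈ P then
    (-1 : ℝ) ^ ((octSet k l x y ∩ H).card) else 0

lemma devP_eq_sum_octTerm (k l : ℕ) {n : ℕ} (H : Finset (Finset (Fin n)))
    (P : Set (Fin k → Fin n)) :
    devP k l H P = ∑ x : Fin (k - l) → Fin n, ∑ y : Fin l × Fin 2 → Fin n, octTerm k l H P x y :=
  rfl

lemma abs_octTerm_le_one (k l : ℕ) {n : ℕ} (H : Finset (Finset (Fin n)))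
    (P : Set (Fin k → Fin n)) (x : Fin (k - l) → Fin n) (y : Fin l × Fin 2 → Fin n) :
    |octTerm k l H P x y| ≤ 1 := by
  unfold octTerm
  split_ifs <;> simp

lemma octTuple_of_lt {n k ℓ : ℕ} (x : Fin (k - ℓ) → Fin n) (y : Fin ℓ × Fin 2 → Fin n)
    (ε : Fin ℓ → Fin 2) {i : Fin k} (h : (i : ℕ) < k - ℓ) :
    octTuple k ℓ x y ε i = x ⟨i, h⟩ :=
  dif_pos h

lemma octTuple_of_not_lt {n k ℓ : ℕ} (x : Fin (k - ℓ) → Fin n) (y : Fin ℓ × Fin 2 → Fin n)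
    (ε : Fin ℓ → Fin 2) {i : Fin k} (h : ¬(i : ℕ) < k - ℓ) (hi : (i : ℕ) - (k - ℓ) < ℓ) :
    octTuple k ℓ x y ε i = y (⟨i - (k - ℓ), hi⟩, ε ⟨i - (k - ℓ), hi⟩) :=
  dif_neg h

section Extend

variable {k l n : ℕ}

def extendX (u : Fin (k - (l + 1)) → Fin n) (w : Fin n) : Fin (k - l) → Fin n :=
  fun i => if h : (i : ℕ) < k - (l + 1) then u ⟨i, h⟩ else w

def extendY (w₀ w₁ : Fin n) (y : Fin l × Fin 2 → Fin n) : Fin (l + 1) × Fin 2 → Fin n :=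
  fun p => Fin.cases (![w₀, w₁] p.2) (fun j => y (j, p.2)) p.1

lemma extendX_of_lt (u : Fin (k - (l + 1)) → Fin n) (w : Fin n) {i : Fin (k - l)}
    (h : (i : ℕ) < k - (l + 1)) : extendX u w i = u ⟨i, h⟩ :=
  dif_pos h

lemma extendX_of_not_lt (u : Fin (k - (l + 1)) → Fin n) (w : Fin n) {i : Fin (k - l)}
    (h : ¬(i : ℕ) < k - (l + 1)) : extendX u w i = w :=
  dif_neg h

@[simp] lemma extendY_zero (w₀ w₁ : Fin n) (y : Fin l × Fin 2 → Fin n) (b : Fin 2) :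
    extendY w₀ w₁ y (0, b) = ![w₀, w₁] b :=
  rfl

@[simp] lemma extendY_succ (w₀ w₁ : Fin n) (y : Fin l × Fin 2 → Fin n) (j : Fin l) (b : Fin 2) :
    extendY w₀ w₁ y (j.succ, b) = y (j, b) :=
  rfl

lemma octTuple_extendY (hk : l + 1 ≤ k) (u : Fin (k - (l + 1)) → Fin n) (w₀ w₁ : Fin n)
    (y : Fin l × Fin 2 → Fin n) (ε : Fin (l + 1) → Fin 2) :
    octTuple k (l + 1) u (extendY w₀ w₁ y) ε =
      octTuple k l (extendX u (![w₀, w₁] (ε 0))) y (Fin.tail ε) := by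
  funext i
  have hi := i.isLt
  rcases lt_trichotomy (i : ℕ) (k - (l + 1)) with hlt | heq | hgt
  · rw [octTuple_of_lt _ _ _ hlt, octTuple_of_lt _ _ _ (i := i) (by omega), extendX_of_lt _ _ hlt]
  · have h0 : (⟨i - (k - (l + 1)), by omega⟩ : Fin (l + 1)) = 0 := Fin.ext (by simp [heq])
    rw [octTuple_of_not_lt _ _ _ (by omega) (by omega), octTuple_of_lt _ _ _ (by omega),
      extendX_of_not_lt _ _ (by simp [heq]), h0, extendY_zero]
  · have hs : (⟨i - (k - (l + 1)), by omega⟩ : Fin (l + 1)) = Fin.succ ⟨i - (k - l), by omega⟩ :=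
      Fin.ext (by simp; omega)
    rw [octTuple_of_not_lt _ _ _ (by omega) (by omega),
      octTuple_of_not_lt _ _ _ (by omega) (by omega), hs, extendY_succ, Fin.tail]

lemma forall_octTuple_extendY_mem_iff (hk : l + 1 ≤ k) (P : Set (Fin k → Fin n))
    (u : Fin (k - (l + 1)) → Fin n) (w₀ w₁ : Fin n) (y : Fin l × Fin 2 → Fin n) :
    (∀ ε, octTuple k (l + 1) u (extendY w₀ w₁ y) ε ∈ P) ↔
      (∀ ε, octTuple k l (extendX u w₀) y ε ∈ P) ∧ (∀ ε, octTuple k l (extendX u w₁) y ε ∈ P) := by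
  simp only [octTuple_extendY hk, Fin.forall_fin_succ_pi, Fin.tail_cons, Fin.cons_zero,
    Fin.forall_fin_two, Matrix.cons_val_zero, Matrix.cons_val_one]

lemma octSet_extendY (hk : l + 1 ≤ k) (u : Fin (k - (l + 1)) → Fin n) (w₀ w₁ : Fin n)
    (y : Fin l × Fin 2 → Fin n) :
    octSet k (l + 1) u (extendY w₀ w₁ y) =
      octSet k l (extendX u w₀) y ∪ octSet k l (extendX u w₁) y := by
  ext T
  simp [octSet, octTuple_extendY hk, Fin.exists_fin_succ_pi, Fin.exists_fin_two, or_and_right]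

def octVertices (u : Fin (k - (l + 1)) → Fin n) (w : Fin n) (y : Fin l × Fin 2 → Fin n) :
    Finset (Fin n) :=
  insert w (univ.image u ∪ univ.image y)

lemma card_octVertices_le (hk : l + 1 ≤ k) (u : Fin (k - (l + 1)) → Fin n) (w : Fin n)
    (y : Fin l × Fin 2 → Fin n) : (octVertices u w y).card ≤ k + l := by
  have hu := card_image_le (s := univ) (f := u)
  have hy := card_image_le (s := univ) (f := y)
  have := card_union_le (univ.image u) (univ.image y)
  have := card_insert_le w (univ.image u ∪ univ.image y)
  simp only [card_univ, Fintype.card_fin, Fintype.card_prod] at hu hy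
  unfold octVertices
  omega

lemma mem_of_mem_octSet_extendX (hk : l + 1 ≤ k) {u : Fin (k - (l + 1)) → Fin n} {w : Fin n}
    {y : Fin l × Fin 2 → Fin n} {T : Finset (Fin n)} (hT : T ∈ octSet k l (extendX u w) y) :
    w ∈ T := by
  obtain ⟨ε, rfl⟩ : ∃ ε, univ.image (octTuple k l (extendX u w) y ε) = T := by
    simpa [octSet] using (mem_filter.1 hT).1
  refine mem_image.2 ⟨⟨k - (l + 1), by omega⟩, mem_univ _, ?_⟩
  rw [octTuple_of_lt _ _ _ (by simp; omega), extendX_of_not_lt _ _ (by simp)]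

lemma subset_of_mem_octSet_extendX {u : Fin (k - (l + 1)) → Fin n} {w : Fin n}
    {y : Fin l × Fin 2 → Fin n} {T : Finset (Fin n)} (hT : T ∈ octSet k l (extendX u w) y) :
    T ⊆ octVertices u w y := by
  obtain ⟨ε, rfl⟩ : ∃ ε, univ.image (octTuple k l (extendX u w) y ε) = T := by
    simpa [octSet] using (mem_filter.1 hT).1
  intro v hv
  obtain ⟨i, -, rfl⟩ := mem_image.1 hv
  simp only [octVertices, mem_insert, mem_union, mem_image, mem_univ, true_and]
  by_cases hx : (i : ℕ) < k - l
  · rw [octTuple_of_lt _ _ _ hx]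
    by_cases hu : (i : ℕ) < k - (l + 1)
    · exact Or.inr (Or.inl ⟨_, (extendX_of_lt _ _ hu).symm⟩)
    · exact Or.inl (extendX_of_not_lt _ _ hu)
  · rw [octTuple_of_not_lt _ _ _ hx (by omega)]
    exact Or.inr (Or.inr ⟨_, rfl⟩)

lemma disjoint_octSet_extendX (hk : l + 1 ≤ k) {u : Fin (k - (l + 1)) → Fin n} {w₀ w₁ : Fin n}
    {y : Fin l × Fin 2 → Fin n} (hw : w₁ ∉ octVertices u w₀ y) :
    Disjoint (octSet k l (extendX u w₀) y) (octSet k l (extendX u w₁) y) :=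
  disjoint_left.2 fun _ h₀ h₁ =>
    hw (subset_of_mem_octSet_extendX h₀ (mem_of_mem_octSet_extendX hk h₁))

lemma octTerm_extendY_eq_mul (hk : l + 1 ≤ k) (H : Finset (Finset (Fin n)))
    (P : Set (Fin k → Fin n)) (u : Fin (k - (l + 1)) → Fin n) (w₀ w₁ : Fin n)
    (y : Fin l × Fin 2 → Fin n)
    (hdisj : Disjoint (octSet k l (extendX u w₀) y) (octSet k l (extendX u w₁) y)) :
    octTerm k (l + 1) H P u (extendY w₀ w₁ y) =
      octTerm k l H P (extendX u w₀) y * octTerm k l H P (extendX u w₁) y := by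
  have hcard : ((octSet k (l + 1) u (extendY w₀ w₁ y)) ∩ H).card =
      (octSet k l (extendX u w₀) y ∩ H).card + (octSet k l (extendX u w₁) y ∩ H).card := by
    rw [octSet_extendY hk, union_inter_distrib_right,
      card_union_of_disjoint (hdisj.mono inter_subset_left inter_subset_left)]
  unfold octTerm
  rw [hcard, pow_add]
  split_ifs <;> simp_all [forall_octTuple_extendY_mem_iff hk]

lemma octTerm_mul_le (hk : l + 1 ≤ k) (H : Finset (Finset (Fin n)))
    (P : Set (Fin k → Fin n)) (u : Fin (k - (l + 1)) → Fin n) (w₀ w₁ : Fin n)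
    (y : Fin l × Fin 2 → Fin n) :
    octTerm k l H P (extendX u w₀) y * octTerm k l H P (extendX u w₁) y ≤
      octTerm k (l + 1) H P u (extendY w₀ w₁ y) + if w₁ ∈ octVertices u w₀ y then 2 else 0 := by
  split_ifs with hw
  · have h₀ := abs_octTerm_le_one k l H P (extendX u w₀) y
    have h₁ := abs_octTerm_le_one k l H P (extendX u w₁) y
    have h := abs_octTerm_le_one k (l + 1) H P u (extendY w₀ w₁ y)
    rw [abs_le] at h₀ h₁ h
    nlinarith
  · rw [octTerm_extendY_eq_mul hk H P u w₀ w₁ y (disjoint_octSet_extendX hk hw), add_zero]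

lemma sq_sum_octTerm_extendX_le (hk : l + 1 ≤ k) (H : Finset (Finset (Fin n)))
    (P : Set (Fin k → Fin n)) (u : Fin (k - (l + 1)) → Fin n) (y : Fin l × Fin 2 → Fin n) :
    (∑ w, octTerm k l H P (extendX u w) y) ^ 2 ≤
      ∑ w₀, ∑ w₁, octTerm k (l + 1) H P u (extendY w₀ w₁ y) + 2 * (k + l) * n := by
  have hdegenerate : ∀ w₀ : Fin n,
      ∑ w₁ : Fin n, (if w₁ ∈ octVertices u w₀ y then (2 : ℝ) else 0) ≤ 2 * (k + l) := by
    intro w₀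
    rw [sum_ite_mem, univ_inter, sum_const, nsmul_eq_mul, mul_comm]
    gcongr
    exact_mod_cast card_octVertices_le hk u w₀ y
  calc (∑ w, octTerm k l H P (extendX u w) y) ^ 2
      = ∑ w₀, ∑ w₁, octTerm k l H P (extendX u w₀) y * octTerm k l H P (extendX u w₁) y := by
        rw [sq, sum_mul_sum]
    _ ≤ ∑ w₀ : Fin n, ∑ w₁ : Fin n, (octTerm k (l + 1) H P u (extendY w₀ w₁ y) +
          if w₁ ∈ octVertices u w₀ y then 2 else 0) := by
        gcongr with w₀ _ w₁
        exact octTerm_mul_le hk H P u w₀ w₁ y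
    _ ≤ ∑ w₀ : Fin n, (∑ w₁, octTerm k (l + 1) H P u (extendY w₀ w₁ y) + 2 * (k + l)) := by
        gcongr with w₀ _
        rw [sum_add_distrib]
        gcongr
        exact hdegenerate w₀
    _ = ∑ w₀, ∑ w₁, octTerm k (l + 1) H P u (extendY w₀ w₁ y) + 2 * (k + l) * n := by
        simp [sum_add_distrib, mul_comm]

def extendXEquiv (hk : l + 1 ≤ k) :
    (Fin (k - (l + 1)) → Fin n) × Fin n ≃ (Fin (k - l) → Fin n) where
  toFun z := extendX z.1 z.2
  invFun x := (fun i => x ⟨i, by omega⟩, x ⟨k - (l + 1), by omega⟩)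
  left_inv z := by
    ext i
    · exact congrArg Fin.val (extendX_of_lt (i := ⟨i, _⟩) _ _ i.isLt)
    · exact congrArg Fin.val (extendX_of_not_lt (i := ⟨k - (l + 1), _⟩) _ _ (lt_irrefl _))
  right_inv x := by
    funext i
    by_cases h : (i : ℕ) < k - (l + 1)
    · exact extendX_of_lt _ _ h
    · refine (extendX_of_not_lt _ _ h).trans ?_
      exact congrArg x (Fin.ext (by simp; omega))

def extendYEquiv :
    (Fin n × Fin n) × (Fin l × Fin 2 → Fin n) ≃ (Fin (l + 1) × Fin 2 → Fin n) where
  toFun z := extendY z.1.1 z.1.2 z.2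
  invFun y := ((y (0, 0), y (0, 1)), fun p => y (p.1.succ, p.2))
  left_inv z := by ext <;> simp
  right_inv y := by
    funext ⟨j, b⟩
    induction j using Fin.cases with
    | zero => fin_cases b <;> rfl
    | succ j => rfl

lemma devP_eq_sum_extendX (hk : l + 1 ≤ k) (H : Finset (Finset (Fin n)))
    (P : Set (Fin k → Fin n)) :
    devP k l H P = ∑ u, ∑ y, ∑ w, octTerm k l H P (extendX u w) y := by
  rw [devP_eq_sum_octTerm, ← (extendXEquiv hk).sum_comp
    (fun x => ∑ y, octTerm k l H P x y), Fintype.sum_prod_type]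
  exact sum_congr rfl fun u _ => sum_comm

lemma devP_succ_eq_sum_extendY (H : Finset (Finset (Fin n))) (P : Set (Fin k → Fin n)) :
    devP k (l + 1) H P = ∑ u, ∑ y, ∑ w₀, ∑ w₁, octTerm k (l + 1) H P u (extendY w₀ w₁ y) := by
  rw [devP_eq_sum_octTerm]
  refine sum_congr rfl fun u _ => ?_
  rw [← extendYEquiv.sum_comp (octTerm k (l + 1) H P u), Fintype.sum_prod_type,
    Fintype.sum_prod_type]
  exact (sum_congr rfl fun _ _ => sum_comm).trans sum_comm

end Extend

lemma devP_sq_le {k l n : ℕ} (hk : l + 1 ≤ k) (H : Finset (Finset (Fin n)))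
    (P : Set (Fin k → Fin n)) :
    devP k l H P ^ 2 ≤
      (n : ℝ) ^ (k + l - 1) * (devP k (l + 1) H P + 2 * (k + l) * (n : ℝ) ^ (k + l)) := by
  set Z := (Fin (k - (l + 1)) → Fin n) × (Fin l × Fin 2 → Fin n)
  have hcard : (Fintype.card Z : ℝ) = (n : ℝ) ^ (k + l - 1) := by
    simp only [Z, Fintype.card_prod, Fintype.card_fun, Fintype.card_fin]
    push_cast
    rw [← pow_add]
    congr 1
    omega
  calc devP k l H P ^ 2
      = (∑ z : Z, ∑ w, octTerm k l H P (extendX z.1 w) z.2) ^ 2 := by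
        rw [devP_eq_sum_extendX hk, Fintype.sum_prod_type]
    _ ≤ Fintype.card Z * ∑ z : Z, (∑ w, octTerm k l H P (extendX z.1 w) z.2) ^ 2 := by
        simpa using sq_sum_le_card_mul_sum_sq (s := (univ : Finset Z))
    _ ≤ Fintype.card Z * ∑ z : Z,
          (∑ w₀, ∑ w₁, octTerm k (l + 1) H P z.1 (extendY w₀ w₁ z.2) + 2 * (k + l) * n) := by
        gcongr with z
        exact sq_sum_octTerm_extendX_le hk H P z.1 z.2
    _ = Fintype.card Z * (devP k (l + 1) H P + Fintype.card Z * (2 * (k + l) * n)) := by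
        rw [sum_add_distrib, devP_succ_eq_sum_extendY, Fintype.sum_prod_type]
        simp
    _ = (n : ℝ) ^ (k + l - 1) * (devP k (l + 1) H P + 2 * (k + l) * (n : ℝ) ^ (k + l)) := by
        obtain ⟨m, hm⟩ : ∃ m, k + l = m + 1 := ⟨k + l - 1, by omega⟩
        rw [hcard, hm, Nat.add_sub_cancel, pow_succ]
        ring

theorem devP_cauchy_general (k ℓ : ℕ) (hℓ1 : 1 ≤ ℓ) (hℓk : ℓ ≤ k)
    (H : HSeq)
    (P : (n : ℕ) → Set (Fin k → Fin n))
    (h : (fun n => devP k ℓ (H n) (P n)) =o[atTop] fun n => (n : ℝ) ^ (k + ℓ)) :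
    (fun n => devP k (ℓ - 1) (H n) (P n)) =o[atTop] fun n => (n : ℝ) ^ (k + ℓ - 1) := by
  obtain ⟨l, rfl⟩ : ∃ l, ℓ = l + 1 := ⟨ℓ - 1, by omega⟩
  have herror : (fun n : ℕ => 2 * ((k : ℝ) + l) * (n : ℝ) ^ (k + l)) =o[atTop]
      fun n : ℕ => (n : ℝ) ^ (k + (l + 1)) :=
    ((isLittleO_pow_pow_atTop_of_lt (by omega)).comp_tendsto
      tendsto_natCast_atTop_atTop).const_mul_left _
  refine isLittleO_of_sq_le_mul (fun n => devP_sq_le hℓk (H n) (P n)) (fun n => by positivity)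
    (fun n => ?_) (h.add herror)
  rw [abs_of_nonneg (by positivity), ← pow_add, ← pow_mul]
  congr 1
  omega

/-- if `dev_{ℓ,P_n}(H_n) = o(n^{k+ℓ})` then
`dev_{ℓ-1,P_n}(H_n) = o(n^{k+ℓ-1})`. -/
theorem devP_cauchy (k ℓ : ℕ) (hk : 1 ≤ k) (hℓ1 : 1 ≤ ℓ) (hℓk : ℓ ≤ k)
    (H : HSeq) (hH : UniformSeq k H)
    (P : (n : ℕ) → Set (Fin k → Fin n))
    (h : (fun n => devP k ℓ (H n) (P n)) =o[atTop] fun n => (n : ℝ) ^ (k + ℓ)) :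
    (fun n => devP k (ℓ - 1) (H n) (P n)) =o[atTop] fun n => (n : ℝ) ^ (k + ℓ - 1) :=
  devP_cauchy_general k ℓ hℓ1 hℓk H P h
end

section
/- Let k ≥ 3. There exists a hypergraph sequence of k-uniform hypergraphs satisfying CD_{1/2}(k−2) but failing Dev(2). -/
open Filter Finset Asymptotics

/-!
Fix a signing `ε` of the subsets of `Fin n` and let `T` be an edge of `H_n` iff `ε` is `true` on
`T` minus its largest vertex. Grouping the `k`-cliques of a `(k-2)`-graph `G` by this lower part
`A` turns `|K_k(G) ∩ H_n| - |K_k(G)|/2` into half a signed sum `∑_A ±w_G(A)` with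
`∑_A w_G(A)^2 ≤ n^{k+1}`. By Chernoff's bound and a union bound over the `2^{C(n,k-2)}` graphs `G`,
some signing makes all these sums at most `2 n^{k-1/2} = o(n^k)`: this is `CD_{1/2}(k-2)`.

On the other hand, whether a set is an edge does not depend on its largest vertex. For distinct
vertices `x⃗, y⃗` the octahedron term of `Dev(2)` is a product of four edge signs, and summing it
over `y⃗` gives `∑_{u₀,u₁} (∑_v χ(x⃗ u₀ v) χ(x⃗ u₁ v))^2 ≥ 0`. If `x⃗` lies below `3n/4 ≤ u₀, u₁`,
then `χ(x⃗ u₀ v) = χ(x⃗ u₁ v)` for every `v < 3n/4`, so the inner sum is at least `n/2`. Hence the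
deviation sum is at least `c n^{k+2}`, up to the `O(n^{k+1})` tuples with repeated vertices.
-/

namespace CDNotDev

section SignedSum

variable {Ω : Type*} [Fintype Ω]

def signedSum (w : Ω → ℝ) (ε : Ω → Bool) : ℝ := ∑ A, if ε A then -w A else w A

lemma signedSum_neg (w : Ω → ℝ) (ε : Ω → Bool) :
    signedSum (-w) ε = -signedSum w ε := by
  simp only [signedSum, Pi.neg_apply, ← Finset.sum_neg_distrib]
  exact Finset.sum_congr rfl fun A _ => by split <;> rfl

lemma signedSum_const_mul (c : ℝ) (w : Ω → ℝ) (ε : Ω → Bool) :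
    signedSum (fun A => c * w A) ε = c * signedSum w ε := by
  simp only [signedSum, Finset.mul_sum]
  exact Finset.sum_congr rfl fun A _ => by split <;> ring

lemma sum_exp_signedSum [DecidableEq Ω] (w : Ω → ℝ) :
    ∑ ε : Ω → Bool, Real.exp (signedSum w ε)
      = ∏ A, (Real.exp (-w A) + Real.exp (w A)) := by
  have := Finset.prod_univ_sum (fun _ : Ω => Finset.univ)
    (fun A (b : Bool) => Real.exp (if b then -w A else w A))
  simp only [Fintype.piFinset_univ, Fintype.sum_bool] at this
  simp only [signedSum, Real.exp_sum, ← this, if_true, Bool.false_eq_true, if_false]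

lemma sum_exp_signedSum_le [DecidableEq Ω] (w : Ω → ℝ) :
    ∑ ε : Ω → Bool, Real.exp (signedSum w ε)
      ≤ 2 ^ Fintype.card Ω * Real.exp ((∑ A, w A ^ 2) / 2) := by
  rw [sum_exp_signedSum, Finset.sum_div, Real.exp_sum, ← Finset.card_univ,
    ← Finset.prod_const, ← Finset.prod_mul_distrib]
  gcongr with A
  have := Real.cosh_le_exp_half_sq (w A)
  rw [Real.cosh_eq] at this
  linarith

/-- Chernoff's bound, in counting form. -/
lemma card_le_signedSum_le [DecidableEq Ω] (w : Ω → ℝ) {t S : ℝ} (ht : 0 ≤ t) (hS : 0 < S)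
    (hw : ∑ A, w A ^ 2 ≤ S) :
    (#{ε : Ω → Bool | t ≤ signedSum w ε} : ℝ)
      ≤ 2 ^ Fintype.card Ω * Real.exp (-(t ^ 2 / (2 * S))) := by
  set l := t / S
  have hmarkov : (#{ε : Ω → Bool | t ≤ signedSum w ε} : ℝ) * Real.exp (l * t)
      ≤ ∑ ε : Ω → Bool, Real.exp (signedSum (fun A => l * w A) ε) := by
    rw [← nsmul_eq_mul, ← Finset.sum_const]
    refine (Finset.sum_le_sum fun ε hε => ?_).trans
      (Finset.sum_le_sum_of_subset_of_nonneg (Finset.subset_univ _) fun _ _ _ => by positivity)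
    rw [signedSum_const_mul]
    exact Real.exp_le_exp.2 (mul_le_mul_of_nonneg_left (Finset.mem_filter.1 hε).2 (by positivity))
  have hsq : (∑ A, (l * w A) ^ 2) / 2 ≤ l ^ 2 * S / 2 := by
    simp only [mul_pow, ← Finset.mul_sum]
    gcongr
  have hexp : l ^ 2 * S / 2 - l * t = -(t ^ 2 / (2 * S)) := by
    simp only [l]; field_simp; ring
  rw [← hexp, Real.exp_sub, mul_div_assoc', le_div_iff₀ (Real.exp_pos _)]
  calc _ ≤ _ := hmarkov
    _ ≤ _ := sum_exp_signedSum_le _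
    _ ≤ _ := by gcongr

lemma exists_forall_abs_signedSum_lt [DecidableEq Ω] {ι : Type*} (s : Finset ι)
    (w : ι → Ω → ℝ) {t S : ℝ} (ht : 0 ≤ t) (hS : 0 < S)
    (hw : ∀ i ∈ s, ∑ A, w i A ^ 2 ≤ S)
    (hs : 2 * #s < Real.exp (t ^ 2 / (2 * S))) :
    ∃ ε : Ω → Bool, ∀ i ∈ s, |signedSum (w i) ε| < t := by
  by_contra! hbad
  set B := Real.exp (-(t ^ 2 / (2 * S))) with hB
  have hcover : (Finset.univ : Finset (Ω → Bool)) ⊆ s.biUnion fun i =>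
      Finset.univ.filter (t ≤ signedSum (w i) ·) ∪
        Finset.univ.filter (t ≤ signedSum (-w i) ·) := by
    intro ε _
    obtain ⟨i, hi, hle⟩ := hbad ε
    simp only [Finset.mem_biUnion, Finset.mem_union, Finset.mem_filter, Finset.mem_univ,
      true_and, signedSum_neg]
    exact ⟨i, hi, (le_abs'.1 hle).symm.imp_right fun h => by linarith⟩
  have hcard : (2 : ℝ) ^ Fintype.card Ω ≤ #s * (2 * (2 ^ Fintype.card Ω * B)) := by
    calc (2 : ℝ) ^ Fintype.card Ω = #(Finset.univ : Finset (Ω → Bool)) := by simp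
      _ ≤ ∑ i ∈ s,
          ((#{ε | t ≤ signedSum (w i) ε} : ℝ) + #{ε | t ≤ signedSum (-w i) ε}) := by
        exact_mod_cast (Finset.card_le_card hcover).trans (Finset.card_biUnion_le.trans
          (Finset.sum_le_sum fun i _ => Finset.card_union_le _ _))
      _ ≤ ∑ i ∈ s, 2 * (2 ^ Fintype.card Ω * B) := Finset.sum_le_sum fun i hi => by
        have := card_le_signedSum_le (w i) ht hS (hw i hi)
        have := card_le_signedSum_le (-w i) ht hS (by simpa using hw i hi)
        linarith
      _ = _ := by rw [Finset.sum_const, nsmul_eq_mul]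
  have hB1 : 2 * #s * B < 1 := by
    rw [hB, Real.exp_neg, ← div_eq_mul_inv, div_lt_one (Real.exp_pos _)]
    exact hs
  nlinarith [pow_pos (two_pos : (0 : ℝ) < 2) (Fintype.card Ω)]

end SignedSum

section DropMax

variable {α : Type*} [LinearOrder α]

def dropMax (T : Finset α) : Finset α := {v ∈ T | ∃ u ∈ T, v < u}

lemma dropMax_insert_of_forall_lt {S : Finset α} {u : α} (h : ∀ v ∈ S, v < u) :
    dropMax (insert u S) = S := by
  ext v
  simp only [dropMax, Finset.mem_filter, Finset.mem_insert]
  constructor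
  · rintro ⟨rfl | hv, w, rfl | hw, hvw⟩
    · exact absurd hvw (lt_irrefl _)
    · exact absurd hvw (h w hw).not_gt
    · exact hv
    · exact hv
  · exact fun hv => ⟨Or.inr hv, u, Or.inl rfl, h v hv⟩

lemma insert_max'_dropMax {T : Finset α} (hT : T.Nonempty) :
    insert (T.max' hT) (dropMax T) = T := by
  ext v
  simp only [dropMax, Finset.mem_insert, Finset.mem_filter]
  constructor
  · rintro (rfl | ⟨hv, -⟩)
    exacts [T.max'_mem hT, hv]
  · intro hv
    rcases (T.le_max' v hv).lt_or_eq with hlt | heq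
    exacts [Or.inr ⟨hv, _, T.max'_mem hT, hlt⟩, Or.inl heq]

lemma card_filter_dropMax_eq_le [Fintype α] {s : Finset (Finset α)} (hs : ∀ T ∈ s, T.Nonempty)
    (A : Finset α) : #{T ∈ s | dropMax T = A} ≤ Fintype.card α := by
  calc #{T ∈ s | dropMax T = A}
      ≤ #(Finset.univ.image fun u => insert u A) := by
        refine Finset.card_le_card fun T hT => ?_
        obtain ⟨hTs, rfl⟩ := Finset.mem_filter.1 hT
        exact Finset.mem_image.2 ⟨_, Finset.mem_univ _, insert_max'_dropMax (hs T hTs)⟩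
    _ ≤ Fintype.card α := Finset.card_image_le

end DropMax

section Fibres

variable {β Ω : Type*} [Fintype Ω] [DecidableEq Ω]

lemma sum_ite_eq_signedSum (s : Finset β) (φ : β → Ω) (ε : Ω → Bool) :
    ∑ T ∈ s, (if ε (φ T) then -1 else 1 : ℝ)
      = signedSum (fun A => (#{T ∈ s | φ T = A} : ℝ)) ε := by
  rw [← Finset.sum_fiberwise s φ]
  refine Finset.sum_congr rfl fun A _ => ?_
  rw [Finset.sum_congr rfl fun T hT => by rw [(Finset.mem_filter.1 hT).2], Finset.sum_const,
    nsmul_eq_mul]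
  split <;> ring

lemma sum_card_fiber_sq_le (s : Finset β) (φ : β → Ω) {b : ℕ}
    (hb : ∀ A, #{T ∈ s | φ T = A} ≤ b) : ∑ A, #{T ∈ s | φ T = A} ^ 2 ≤ b * #s := by
  rw [Finset.card_eq_sum_card_fiberwise (f := φ) (t := Finset.univ) fun _ _ => Finset.mem_coe.2
    (Finset.mem_univ _), Finset.mul_sum]
  exact Finset.sum_le_sum fun A _ => by rw [sq]; exact Nat.mul_le_mul_right _ (hb A)

end Fibres

lemma card_eq_of_mem_cliqueSet {k ℓ n : ℕ} {G : Finset (Finset (Fin n))} {T : Finset (Fin n)}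
    (hT : T ∈ cliqueSet k ℓ G) : #T = k :=
  (Finset.mem_powersetCard.1 (Finset.mem_filter.1 hT).1).2

lemma card_cliqueSet_le (k ℓ : ℕ) {n : ℕ} (G : Finset (Finset (Fin n))) :
    #(cliqueSet k ℓ G) ≤ n ^ k := by
  calc #(cliqueSet k ℓ G) ≤ #(Finset.powersetCard k (Finset.univ : Finset (Fin n))) :=
        Finset.card_filter_le _ _
    _ = n.choose k := by simp
    _ ≤ n ^ k := Nat.choose_le_pow n k

lemma two_pow_succ_lt_exp (m : ℕ) : (2 : ℝ) ^ (m + 1) < Real.exp (m + 1) := by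
  rw [← Nat.cast_succ, ← Real.exp_one_pow]
  exact pow_lt_pow_left₀ (by linarith [Real.exp_one_gt_d9]) zero_le_two m.succ_ne_zero

def IsBalancedSigning (k n : ℕ) (ε : Finset (Fin n) → Bool) : Prop :=
  ∀ G ∈ (Finset.powersetCard (k - 2) (Finset.univ : Finset (Fin n))).powerset,
    |∑ T ∈ cliqueSet k (k - 2) G, (if ε (dropMax T) then -1 else 1 : ℝ)|
      ≤ 2 * √((n : ℝ) ^ (2 * k - 1))

lemma sum_sq_card_cliqueSet_filter_dropMax_le {k : ℕ} (hk : 1 ≤ k) (ℓ : ℕ) {n : ℕ}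
    (G : Finset (Finset (Fin n))) :
    ∑ A, (#{T ∈ cliqueSet k ℓ G | dropMax T = A} : ℝ) ^ 2 ≤ (n : ℝ) ^ (k + 1) := by
  have hfib := sum_card_fiber_sq_le (cliqueSet k ℓ G) dropMax (b := n) fun A =>
    (card_filter_dropMax_eq_le (fun T hT => Finset.card_pos.1
      (by rw [card_eq_of_mem_cliqueSet hT]; omega)) A).trans (Fintype.card_fin n).le
  have hK := Nat.mul_le_mul_left n (card_cliqueSet_le k ℓ G)
  rw [pow_succ']
  exact_mod_cast hfib.trans hK

lemma two_mul_card_powerset_powersetCard_lt_exp {k n : ℕ} (hk : 2 ≤ k) (hn : 0 < n) :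
    (2 : ℝ) * #(Finset.powersetCard (k - 2) (Finset.univ : Finset (Fin n))).powerset
      < Real.exp ((2 * √((n : ℝ) ^ (2 * k - 1))) ^ 2 / (2 * (n : ℝ) ^ (k + 1))) := by
  have hexp : (2 * √((n : ℝ) ^ (2 * k - 1))) ^ 2 / (2 * (n : ℝ) ^ (k + 1))
      = 2 * (n : ℝ) ^ (k - 2) := by
    have : (0 : ℝ) < n := by exact_mod_cast hn
    rw [mul_pow, Real.sq_sqrt (by positivity),
      show 2 * k - 1 = (k + 1) + (k - 2) by omega, pow_add]
    field_simp
  have hchoose : ((n.choose (k - 2) : ℕ) : ℝ) ≤ (n : ℝ) ^ (k - 2) := by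
    exact_mod_cast Nat.choose_le_pow n (k - 2)
  have hone : (1 : ℝ) ≤ (n : ℝ) ^ (k - 2) := one_le_pow₀ (by exact_mod_cast hn)
  calc _ = (2 : ℝ) ^ (n.choose (k - 2) + 1) := by simp [pow_succ, mul_comm]
    _ < Real.exp (n.choose (k - 2) + 1) := two_pow_succ_lt_exp _
    _ ≤ _ := by rw [hexp]; exact Real.exp_le_exp.2 (by linarith)

lemma exists_isBalancedSigning {k : ℕ} (hk : 2 ≤ k) (n : ℕ) :
    ∃ ε, IsBalancedSigning k n ε := by
  rcases n.eq_zero_or_pos with rfl | hn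
  · refine ⟨fun _ => true, fun G _ => ?_⟩
    have : cliqueSet k (k - 2) G = ∅ := by
      rw [cliqueSet, Finset.powersetCard_eq_empty.2 (by simp; omega), Finset.filter_empty]
    simp [this]
  obtain ⟨ε, hε⟩ := exists_forall_abs_signedSum_lt _
    (fun G A => (#{T ∈ cliqueSet k (k - 2) G | dropMax T = A} : ℝ)) (by positivity)
    (by positivity) (fun G _ => sum_sq_card_cliqueSet_filter_dropMax_le (by omega) _ G)
    (two_mul_card_powerset_powersetCard_lt_exp hk hn)
  exact ⟨ε, fun G hG => by rw [sum_ite_eq_signedSum]; exact (hε G hG).le⟩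

noncomputable def balancedSigning (k n : ℕ) : Finset (Fin n) → Bool :=
  Classical.epsilon (IsBalancedSigning k n)

lemma isBalancedSigning_balancedSigning {k : ℕ} (hk : 2 ≤ k) (n : ℕ) :
    IsBalancedSigning k n (balancedSigning k n) :=
  Classical.epsilon_spec (exists_isBalancedSigning hk n)

noncomputable def cdSeq (k : ℕ) : HSeq := fun n =>
  {T ∈ Finset.powersetCard k Finset.univ | balancedSigning k n (dropMax T)}

lemma mem_cdSeq {k n : ℕ} {T : Finset (Fin n)} :
    T ∈ cdSeq k n ↔ #T = k ∧ balancedSigning k n (dropMax T) = true := by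
  simp [cdSeq, Finset.mem_powersetCard]

lemma uniformSeq_cdSeq (k : ℕ) : UniformSeq k (cdSeq k) := fun _ _ he => (mem_cdSeq.1 he).1

lemma isLittleO_sqrt_pow {k : ℕ} (hk : 1 ≤ k) :
    (fun n : ℕ => √((n : ℝ) ^ (2 * k - 1))) =o[atTop] fun n => (n : ℝ) ^ k := by
  have h := (isLittleO_pow_pow_atTop_of_lt (𝕜 := ℝ)
    (show 2 * k - 1 < k * 2 by omega)).comp_tendsto tendsto_natCast_atTop_atTop
  refine IsLittleO.of_pow (h.congr (fun n => ?_) fun n => ?_) two_ne_zero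
  · simp [Real.sq_sqrt (by positivity : (0 : ℝ) ≤ (n : ℝ) ^ (2 * k - 1))]
  · simp [← pow_mul]

lemma cd_cdSeq {k : ℕ} (hk : 2 ≤ k) : CD k (1 / 2) (k - 2) (cdSeq k) := by
  refine ⟨fun n => √((n : ℝ) ^ (2 * k - 1)), isLittleO_sqrt_pow (by omega),
    fun n G hG => ?_⟩
  set K := cliqueSet k (k - 2) G
  have hdev : (#(K ∩ cdSeq k n) : ℝ) - 1 / 2 * #K
      = -(1 / 2) * ∑ T ∈ K, (if balancedSigning k n (dropMax T) then -1 else 1 : ℝ) := by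
    rw [← Finset.filter_mem_eq_inter, Finset.card_filter, Finset.card_eq_sum_ones K]
    push_cast
    rw [Finset.mul_sum, Finset.mul_sum, ← Finset.sum_sub_distrib]
    refine Finset.sum_congr rfl fun T hT => ?_
    simp only [mem_cdSeq, card_eq_of_mem_cliqueSet hT, true_and]
    split <;> norm_num
  have hG' : G ∈ (Finset.powersetCard (k - 2) (Finset.univ : Finset (Fin n))).powerset :=
    Finset.mem_powerset.2 fun e he => Finset.mem_powersetCard.2 ⟨Finset.subset_univ _, hG e he⟩
  have hbal := isBalancedSigning_balancedSigning hk n G hG'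
  rw [hdev, abs_mul]
  norm_num
  linarith

lemma pow_le_descFactorial_add (n m : ℕ) : n ^ m ≤ n.descFactorial m + m ^ 2 * n ^ (m - 1) := by
  induction m with
  | zero => simp
  | succ m ih =>
    have hdesc : n * n.descFactorial m ≤ n.descFactorial (m + 1) + m * n.descFactorial m := by
      rw [Nat.descFactorial_succ, ← add_mul]
      exact Nat.mul_le_mul_right _ (by omega)
    have hpow : n * (m ^ 2 * n ^ (m - 1)) ≤ m ^ 2 * n ^ m := by
      rcases m with _ | m
      · simp
      · rw [Nat.add_sub_cancel, pow_succ]; exact le_of_eq (by ring)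
    have hdesc_le := Nat.mul_le_mul_left m (Nat.descFactorial_le_pow n m)
    calc n ^ (m + 1) = n * n ^ m := pow_succ' n m
      _ ≤ n * n.descFactorial m + n * (m ^ 2 * n ^ (m - 1)) := by
        rw [← mul_add]; exact Nat.mul_le_mul_left n ih
      _ ≤ n.descFactorial (m + 1) + (m + 1) ^ 2 * n ^ (m + 1 - 1) := by
        have e : (m + 1) ^ 2 * n ^ m = m ^ 2 * n ^ m + m * n ^ m + (m + 1) * n ^ m := by ring
        rw [Nat.add_sub_cancel, e]
        linarith [Nat.zero_le ((m + 1) * n ^ m)]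

lemma card_not_injective_le (α β : Type*) [Fintype α] [DecidableEq α] [Fintype β]
    [DecidableEq β] :
    #{f : α → β | ¬ Function.Injective f}
      ≤ Fintype.card α ^ 2 * Fintype.card β ^ (Fintype.card α - 1) := by
  have hinj : #{f : α → β | Function.Injective f}
      = (Fintype.card β).descFactorial (Fintype.card α) := by
    rw [← Fintype.card_subtype, Fintype.card_congr (Equiv.subtypeInjectiveEquivEmbedding α β),
      Fintype.card_embedding_eq]
  have hsplit := Finset.card_filter_add_card_filter_not (s := Finset.univ)
    (fun f : α → β => Function.Injective f)
  rw [Finset.card_univ, Fintype.card_fun, hinj] at hsplit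
  have := pow_le_descFactorial_add (Fintype.card β) (Fintype.card α)
  omega

def edgeSign {α : Type*} [DecidableEq α] (H : Finset (Finset α)) (T : Finset α) : ℝ :=
  if T ∈ H then -1 else 1

lemma neg_one_pow_card_inter {α : Type*} [DecidableEq α] (s H : Finset (Finset α)) :
    (-1 : ℝ) ^ #(s ∩ H) = ∏ T ∈ s, edgeSign H T := by
  rw [← Finset.prod_const, ← Finset.prod_ite_mem]
  rfl

lemma abs_edgeSign {α : Type*} [DecidableEq α] (H : Finset (Finset α)) (T : Finset α) :
    |edgeSign H T| = 1 := by
  unfold edgeSign; split <;> simp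

section Octahedra

variable {k ℓ n : ℕ} {x : Fin (k - ℓ) → Fin n} {y : Fin ℓ × Fin 2 → Fin n}

lemma image_octTuple (hℓ : ℓ ≤ k) (ε : Fin ℓ → Fin 2) :
    Finset.univ.image (octTuple k ℓ x y ε)
      = Finset.univ.image x ∪ Finset.univ.image fun j => y (j, ε j) := by
  ext a
  simp only [Finset.mem_union, Finset.mem_image, Finset.mem_univ, true_and]
  constructor
  · rintro ⟨i, rfl⟩
    unfold octTuple
    split_ifs
    exacts [Or.inl ⟨_, rfl⟩, Or.inr ⟨_, rfl⟩]
  · rintro (⟨j, rfl⟩ | ⟨j, rfl⟩)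
    · exact ⟨Fin.castLE (by omega) j, by simp [octTuple]⟩
    · refine ⟨⟨k - ℓ + j, by omega⟩, ?_⟩
      simp [octTuple]

variable (hℓ : ℓ ≤ k) (hz : Function.Injective (Sum.elim x y))
include hℓ hz

lemma card_image_octTuple (ε : Fin ℓ → Fin 2) :
    #(Finset.univ.image (octTuple k ℓ x y ε)) = k := by
  have hx : Function.Injective x := hz.comp Sum.inl_injective
  have hy : Function.Injective fun j => y (j, ε j) := fun i j h =>
    (Prod.ext_iff.1 (Sum.inr_injective (hz h))).1
  have hdisj : Disjoint (Finset.univ.image x) (Finset.univ.image fun j => y (j, ε j)) := by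
    simp only [Finset.disjoint_left, Finset.mem_image, Finset.mem_univ, true_and]
    rintro _ ⟨i, rfl⟩ ⟨j, hj⟩
    exact Sum.inr_ne_inl (hz hj)
  rw [image_octTuple hℓ, Finset.card_union_of_disjoint hdisj, Finset.card_image_of_injective _ hx,
    Finset.card_image_of_injective _ hy]
  simp only [Finset.card_univ, Fintype.card_fin]
  omega

lemma injective_image_octTuple :
    Function.Injective fun ε : Fin ℓ → Fin 2 => Finset.univ.image (octTuple k ℓ x y ε) := by
  intro ε ε' h
  simp only at h
  funext j
  have hmem : y (j, ε j) ∈ Finset.univ.image (octTuple k ℓ x y ε') := by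
    rw [← h, image_octTuple hℓ]
    exact Finset.mem_union_right _ (Finset.mem_image_of_mem _ (Finset.mem_univ j))
  rw [image_octTuple hℓ] at hmem
  simp only [Finset.mem_union, Finset.mem_image, Finset.mem_univ, true_and] at hmem
  rcases hmem with ⟨i, hi⟩ | ⟨i, hi⟩
  · exact absurd (hz (a₁ := .inl i) (a₂ := .inr (j, ε j)) hi) Sum.inl_ne_inr
  · obtain ⟨rfl, hε⟩ := Prod.ext_iff.1 (Sum.inr_injective (hz hi))
    exact hε.symm

lemma neg_one_pow_card_octSet_inter (H : Finset (Finset (Fin n))) :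
    (-1 : ℝ) ^ #(octSet k ℓ x y ∩ H)
      = ∏ ε, edgeSign H (Finset.univ.image (octTuple k ℓ x y ε)) := by
  have hoct : octSet k ℓ x y
      = Finset.univ.image fun ε => Finset.univ.image (octTuple k ℓ x y ε) :=
    Finset.filter_true_of_mem fun T hT => by
      obtain ⟨ε, -, rfl⟩ := Finset.mem_image.1 hT
      exact card_image_octTuple hℓ hz ε
  rw [neg_one_pow_card_inter, hoct, Finset.prod_image fun ε _ ε' _ h =>
    injective_image_octTuple hℓ hz h]

end Octahedra

noncomputable def octProd (k ℓ : ℕ) {n : ℕ} (H : Finset (Finset (Fin n)))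
    (x : Fin (k - ℓ) → Fin n) (y : Fin ℓ × Fin 2 → Fin n) : ℝ :=
  ∏ ε, edgeSign H (Finset.univ.image (octTuple k ℓ x y ε))

lemma abs_devSum_sub_sum_octProd_le {k ℓ n : ℕ} (hℓ : ℓ ≤ k)
    (H : Finset (Finset (Fin n))) :
    |devSum k ℓ H - ∑ x, ∑ y, octProd k ℓ H x y|
      ≤ 2 * ((k + ℓ) ^ 2 * n ^ (k + ℓ - 1) : ℕ) := by
  have hterm : ∀ x y, |(-1 : ℝ) ^ #(octSet k ℓ x y ∩ H) - octProd k ℓ H x y|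
      ≤ if Function.Injective (Sum.elim x y) then 0 else 2 := by
    intro x y
    split_ifs with hz
    · rw [octProd, neg_one_pow_card_octSet_inter hℓ hz, sub_self, abs_zero]
    · have : |octProd k ℓ H x y| = 1 := by simp [octProd, Finset.abs_prod, abs_edgeSign]
      calc _ ≤ |(-1 : ℝ) ^ #(octSet k ℓ x y ∩ H)| + |octProd k ℓ H x y| := abs_sub _ _
        _ = 2 := by rw [this]; norm_num
  have hcount : ∑ x : Fin (k - ℓ) → Fin n, ∑ y : Fin ℓ × Fin 2 → Fin n,
        (if Function.Injective (Sum.elim x y) then (0 : ℝ) else 2)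
      = 2 * #{z : Fin (k - ℓ) ⊕ Fin ℓ × Fin 2 → Fin n | ¬ Function.Injective z} := by
    rw [← Fintype.sum_prod_type',
      ← (Equiv.sumArrowEquivProdArrow (Fin (k - ℓ)) (Fin ℓ × Fin 2) (Fin n)).sum_comp,
      Finset.card_filter, Nat.cast_sum, Finset.mul_sum]
    refine Finset.sum_congr rfl fun z _ => ?_
    change (if Function.Injective (Sum.elim (z ∘ Sum.inl) (z ∘ Sum.inr)) then _ else _) = _
    rw [Sum.elim_comp_inl_inr]
    split_ifs <;> simp
  have hbad := card_not_injective_le (Fin (k - ℓ) ⊕ Fin ℓ × Fin 2) (Fin n)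
  simp only [Fintype.card_sum, Fintype.card_prod, Fintype.card_fin,
    show k - ℓ + ℓ * 2 = k + ℓ by omega] at hbad
  calc _ = |∑ x, ∑ y, ((-1 : ℝ) ^ #(octSet k ℓ x y ∩ H) - octProd k ℓ H x y)| := by
        simp only [devSum, Finset.sum_sub_distrib]
    _ ≤ ∑ x, ∑ y, |(-1 : ℝ) ^ #(octSet k ℓ x y ∩ H) - octProd k ℓ H x y| :=
        (Finset.abs_sum_le_sum_abs _ _).trans
          (Finset.sum_le_sum fun x _ => Finset.abs_sum_le_sum_abs _ _)
    _ ≤ _ := Finset.sum_le_sum fun x _ => Finset.sum_le_sum fun y _ => hterm x y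
    _ ≤ _ := by rw [hcount]; gcongr

lemma sum_prod_box_eq_sum_sq {β R : Type*} [Fintype β] [DecidableEq β] [CommSemiring R]
    (f : β → β → R) :
    ∑ y : Fin 2 × Fin 2 → β, ∏ ε : Fin 2 → Fin 2, f (y (0, ε 0)) (y (1, ε 1))
      = ∑ u : Fin 2 → β, (∑ v, ∏ a, f (u a) v) ^ 2 := by
  rw [Fintype.sum_equiv ((Equiv.curry (Fin 2) (Fin 2) β).trans (piFinTwoEquiv fun _ => _))
    (fun y => ∏ ε : Fin 2 → Fin 2, f (y (0, ε 0)) (y (1, ε 1)))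
    (fun p => ∏ ε : Fin 2 → Fin 2, f (p.1 (ε 0)) (p.2 (ε 1))) fun y => rfl,
    Fintype.sum_prod_type]
  refine Finset.sum_congr rfl fun u _ => ?_
  have hgrid : ∀ w : Fin 2 → β, ∏ ε : Fin 2 → Fin 2, f (u (ε 0)) (w (ε 1))
      = ∏ b, ∏ a, f (u a) (w b) := fun w => by
    rw [← Fintype.prod_equiv (piFinTwoEquiv fun _ => Fin 2).symm
      (fun p : Fin 2 × Fin 2 => f (u p.1) (w p.2)) _ fun p => rfl,
      Fintype.prod_prod_type, Finset.prod_comm]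
  simp only [hgrid]
  rw [← Fintype.prod_sum (fun (_ : Fin 2) v => ∏ a, f (u a) v), Finset.prod_const,
    Finset.card_univ, Fintype.card_fin]

def MemIndepOfMax {α : Type*} [LinearOrder α] (H : Finset (Finset α)) : Prop :=
  ∀ (S : Finset α) (u u' : α), (∀ v ∈ S, v < u) → (∀ v ∈ S, v < u') →
    (insert u S ∈ H ↔ insert u' S ∈ H)

lemma image_octTuple_two {k n : ℕ} (hk : 2 ≤ k) (x : Fin (k - 2) → Fin n)
    (y : Fin 2 × Fin 2 → Fin n) (ε : Fin 2 → Fin 2) :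
    Finset.univ.image (octTuple k 2 x y ε)
      = insert (y (0, ε 0)) (insert (y (1, ε 1)) (Finset.univ.image x)) := by
  rw [image_octTuple hk]
  ext
  simp only [Finset.mem_union, Finset.mem_image, Finset.mem_univ, true_and, Fin.exists_fin_two,
    Finset.mem_insert]
  tauto

lemma sum_octProd_two_eq {k n : ℕ} (hk : 2 ≤ k) (H : Finset (Finset (Fin n)))
    (x : Fin (k - 2) → Fin n) :
    ∑ y, octProd k 2 H x y
      = ∑ u : Fin 2 → Fin n,
          (∑ v, ∏ a, edgeSign H (insert (u a) (insert v (Finset.univ.image x)))) ^ 2 := by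
  simp only [octProd, image_octTuple_two hk]
  exact sum_prod_box_eq_sum_sq fun u v => edgeSign H (insert u (insert v (Finset.univ.image x)))

lemma le_sum_of_eq_one_of_neg_one_le {α : Type*} [Fintype α] [DecidableEq α] (s : Finset α)
    (g : α → ℝ) (hs : ∀ v ∈ s, g v = 1) (hg : ∀ v, -1 ≤ g v) :
    2 * #s - Fintype.card α ≤ ∑ v, g v := by
  rw [← Finset.sum_add_sum_compl s g, Finset.sum_congr rfl hs]
  have hcompl := Finset.card_nsmul_le_sum sᶜ g (-1) fun v _ => hg v
  rw [nsmul_eq_mul, Finset.card_compl, Nat.cast_sub (Finset.card_le_univ s)] at hcompl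
  simp only [Finset.sum_const, nsmul_eq_mul, mul_one]
  linarith

lemma two_mul_sub_le_sum_prod_edgeSign {n m : ℕ} (hmn : m ≤ n) {H : Finset (Finset (Fin n))}
    (hH : MemIndepOfMax H) {A : Finset (Fin n)} (hA : ∀ v ∈ A, (v : ℕ) < m)
    {u : Fin 2 → Fin n} (hu : ∀ a, m ≤ (u a : ℕ)) :
    2 * (m : ℝ) - n ≤ ∑ v, ∏ a, edgeSign H (insert (u a) (insert v A)) := by
  have := le_sum_of_eq_one_of_neg_one_le {v : Fin n | (v : ℕ) < m}
    (fun v => ∏ a, edgeSign H (insert (u a) (insert v A))) (fun v hv => ?_) fun v => ?_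
  · rwa [Fin.card_filter_val_lt, min_eq_right hmn, Fintype.card_fin] at this
  · -- both `u 0` and `u 1` lie above `insert v A`, so their two signs agree
    have hlt : ∀ a, ∀ w ∈ insert v A, w < u a := fun a w hw => by
      have := hu a
      rcases Finset.mem_insert.1 hw with rfl | hw
      · exact Fin.lt_def.2 (by simp at hv; omega)
      · exact Fin.lt_def.2 (by have := hA w hw; omega)
    simp only [Fin.prod_univ_two, edgeSign, hH _ _ _ (hlt 0) (hlt 1)]
    split <;> norm_num
  · have : |∏ a, edgeSign H (insert (u a) (insert v A))| = 1 := by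
      simp [abs_edgeSign]
    exact neg_le_of_abs_le this.le

lemma sum_octProd_two_ge {k n m : ℕ} (hk : 2 ≤ k) (hmn : m ≤ n) (hnm : n ≤ 2 * m)
    {H : Finset (Finset (Fin n))} (hH : MemIndepOfMax H) :
    (m : ℝ) ^ (k - 2) * ((n - m : ℕ) : ℝ) ^ 2 * (2 * m - n) ^ 2
      ≤ ∑ x, ∑ y, octProd k 2 H x y := by
  set X := Fintype.piFinset fun _ : Fin (k - 2) => ({v : Fin n | (v : ℕ) < m} : Finset _)
  set U := Fintype.piFinset fun _ : Fin 2 => ({v : Fin n | ¬ (v : ℕ) < m} : Finset _)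
  have hlow : #{v : Fin n | (v : ℕ) < m} = m := by rw [Fin.card_filter_val_lt, min_eq_right hmn]
  have hX : #X = m ^ (k - 2) := by simp only [X, Fintype.card_piFinset, hlow]; simp
  have hU : #U = (n - m) ^ 2 := by
    have := Finset.card_filter_add_card_filter_not (s := Finset.univ) fun v : Fin n => (v : ℕ) < m
    simp only [U, Fintype.card_piFinset, Finset.card_univ, Fintype.card_fin] at this ⊢
    simp only [Finset.prod_const, Finset.card_univ, Fintype.card_fin]
    congr 1
    omega
  set F := fun (x : Fin (k - 2) → Fin n) (u : Fin 2 → Fin n) =>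
    (∑ v, ∏ a, edgeSign H (insert (u a) (insert v (Finset.univ.image x)))) ^ 2
  have hnm' : (n : ℝ) ≤ 2 * m := by exact_mod_cast hnm
  calc _ = ∑ x ∈ X, ∑ u ∈ U, (2 * (m : ℝ) - n) ^ 2 := by simp [hX, hU, mul_assoc]
    _ ≤ ∑ x ∈ X, ∑ u ∈ U, F x u := by
        refine Finset.sum_le_sum fun x hx => Finset.sum_le_sum fun u hu => ?_
        simp only [X, U, Fintype.mem_piFinset, Finset.mem_filter, Finset.mem_univ, true_and,
          not_lt] at hx hu
        refine pow_le_pow_left₀ (by linarith) ?_ 2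
        refine two_mul_sub_le_sum_prod_edgeSign hmn hH (fun v hv => ?_) hu
        obtain ⟨i, -, rfl⟩ := Finset.mem_image.1 hv
        exact hx i
    _ ≤ ∑ x ∈ X, ∑ u, F x u := Finset.sum_le_sum fun x _ =>
        Finset.sum_le_sum_of_subset_of_nonneg (Finset.subset_univ _) fun _ _ _ => sq_nonneg _
    _ ≤ ∑ x, ∑ u, F x u := Finset.sum_le_sum_of_subset_of_nonneg (Finset.subset_univ _)
        fun _ _ _ => Finset.sum_nonneg fun _ _ => sq_nonneg _
    _ = _ := Finset.sum_congr rfl fun x _ => (sum_octProd_two_eq hk H x).symm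

lemma devSum_two_ge {k : ℕ} (hk : 2 ≤ k) (N : ℕ) {H : Finset (Finset (Fin (4 * N)))}
    (hH : MemIndepOfMax H) :
    4 * 3 ^ (k - 2) * (N : ℝ) ^ (k + 2) - 2 * ((k + 2) ^ 2 * 4 ^ (k + 1)) * (N : ℝ) ^ (k + 1)
      ≤ devSum k 2 H := by
  have hmain := sum_octProd_two_ge (m := 3 * N) hk (by omega) (by omega) hH
  have herr := abs_devSum_sub_sum_octProd_le (by omega : 2 ≤ k) H
  rw [show k + 2 - 1 = k + 1 by omega] at herr
  have hpow : (k + 2 : ℝ) ^ 2 * 4 ^ (k + 1) * (N : ℝ) ^ (k + 1)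
      = (((k + 2) ^ 2 * (4 * N) ^ (k + 1) : ℕ) : ℝ) := by push_cast; ring
  have hmain' : 4 * 3 ^ (k - 2) * (N : ℝ) ^ (k + 2)
      = ((3 * N : ℕ) : ℝ) ^ (k - 2) * ((4 * N - 3 * N : ℕ) : ℝ) ^ 2
        * (2 * ((3 * N : ℕ) : ℝ) - ((4 * N : ℕ) : ℝ)) ^ 2 := by
    rw [show 4 * N - 3 * N = N by omega, show k + 2 = (k - 2) + 4 by omega]
    push_cast
    ring
  linarith [abs_le.1 herr]

lemma not_isLittleO_of_le_sub {D : ℕ → ℝ} {c C : ℝ} {m : ℕ} (hc : 0 < c)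
    (h : ∀ N : ℕ, c * (N : ℝ) ^ (m + 1) - C * (N : ℝ) ^ m ≤ D N) :
    ¬ D =o[atTop] fun N => (N : ℝ) ^ (m + 1) := by
  intro hD
  have hlower : (fun N : ℕ => D N + C * (N : ℝ) ^ m) =o[atTop] fun N => (N : ℝ) ^ (m + 1) :=
    hD.add (((isLittleO_pow_pow_atTop_of_lt m.lt_succ_self).comp_tendsto
      tendsto_natCast_atTop_atTop).const_mul_left C)
  have hself : (fun N : ℕ => c * (N : ℝ) ^ (m + 1)) =o[atTop] fun N => (N : ℝ) ^ (m + 1) := by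
    refine IsBigO.trans_isLittleO (IsBigO.of_bound 1 (Eventually.of_forall fun N => ?_)) hlower
    rw [Real.norm_of_nonneg (by positivity), one_mul]
    exact (by linarith [h N] : _ ≤ D N + C * (N : ℝ) ^ m).trans (le_abs_self _)
  refine isLittleO_irrefl ?_ ((isLittleO_const_mul_left_iff hc.ne').1 hself)
  exact (eventually_gt_atTop 0).frequently.mono fun N hN => by positivity

lemma not_dev_two_of_memIndepOfMax {k : ℕ} (hk : 2 ≤ k) {H : HSeq}
    (hH : ∀ n, MemIndepOfMax (H n)) : ¬ Dev k 2 H := by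
  intro hdev
  have h4 : Tendsto (fun N : ℕ => 4 * N) atTop atTop := tendsto_id.const_mul_atTop' four_pos
  refine not_isLittleO_of_le_sub (m := k + 1) (by positivity)
    (fun N => devSum_two_ge hk N (hH _)) ?_
  refine (hdev.comp_tendsto h4).trans_isBigO ?_
  exact (isBigO_const_mul_self ((4 : ℝ) ^ (k + 2)) _ _).congr_left fun N => by
    simp only [Function.comp_apply]; push_cast; ring

lemma memIndepOfMax_cdSeq (k n : ℕ) : MemIndepOfMax (cdSeq k n) := fun S u u' hu hu' => by
  have hcard : ∀ w, (∀ v ∈ S, v < w) → #(insert w S) = #S + 1 := fun w hw =>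
    Finset.card_insert_of_notMem fun h => lt_irrefl _ (hw w h)
  simp only [mem_cdSeq, hcard u hu, hcard u' hu', dropMax_insert_of_forall_lt hu,
    dropMax_insert_of_forall_lt hu']

end CDNotDev

/-- some `k`-uniform sequence satisfies `CD_{1/2}(k-2)` but fails `Dev(2)`. -/
theorem cd_not_implies_dev (k : ℕ) (hk : 3 ≤ k) :
    ∃ H : HSeq, UniformSeq k H ∧ CD k (1/2 : ℝ) (k - 2) H ∧ ¬ Dev k 2 H :=
  ⟨CDNotDev.cdSeq k, CDNotDev.uniformSeq_cdSeq k, CDNotDev.cd_cdSeq (by omega),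
    CDNotDev.not_dev_two_of_memIndepOfMax (by omega) (CDNotDev.memIndepOfMax_cdSeq k)⟩
end

section
/- Let k ≥ 2 and let 3 ≤ ℓ ≤ k. Then every hypergraph sequence of k-uniform hypergraphs satisfying Dev(ℓ) also satisfies Dev(ℓ−1). -/
/-!
Split the last `x`-vertex `z` off the sum `dev_{ℓ-1}` and apply Cauchy–Schwarz over the
remaining `k + ℓ - 2` vertices: `dev_{ℓ-1}² ≤ n^{k+ℓ-2} Σ_{x',y} (Σ_z s(z))²`, where
`s(z)` is the sign of the octahedron with `x = (x', z)`. In the expanded square,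
`s(z₀) s(z₁)` is the sign of the octahedron of dimension `ℓ` with new pair `(z₀, z₁)`,
since that octahedron is the disjoint union of the two smaller ones as soon as `z₀`
differs from all other vertices. The `≤ (k + ℓ - 1) n` exceptional pairs contribute
`O(n^{k+ℓ-1})`, so `dev_{ℓ-1}² ≤ n^{k+ℓ-2} (|dev_ℓ| + O(n^{k+ℓ-1}))`, which is
`o(n^{2(k+ℓ-1)})`.
-/

open Filter Finset Asymptotics

variable {V : Type*}

def consRow {m : ℕ} (z₀ z₁ : V) (y : Fin m × Fin 2 → V) : Fin (m + 1) × Fin 2 → V :=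
  Function.uncurry (Fin.cons ![z₀, z₁] (Function.curry y))

lemma sum_consRow [Fintype V] {M : Type*} [AddCommMonoid M] {m : ℕ}
    (g : (Fin (m + 1) × Fin 2 → V) → M) :
    ∑ Y, g Y = ∑ y : Fin m × Fin 2 → V, ∑ z₀, ∑ z₁, g (consRow z₀ z₁ y) := by
  rw [← (Equiv.curry _ _ _).symm.sum_comp, ← (Fin.consEquiv fun _ => Fin 2 → V).sum_comp,
    Fintype.sum_prod_type, sum_comm, ← (Equiv.curry _ _ _).sum_comp]
  refine sum_congr rfl fun y _ => ?_
  rw [← (piFinTwoEquiv fun _ => V).symm.sum_comp, Fintype.sum_prod_type]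
  rfl

variable [DecidableEq V]

def octahedron {ℓ : ℕ} (A : Finset V) (y : Fin ℓ × Fin 2 → V) : Finset (Finset V) :=
  univ.image fun ε : Fin ℓ → Fin 2 => A ∪ univ.image fun j => y (j, ε j)

noncomputable def octSign (H : Finset (Finset V)) {ℓ : ℕ} (A : Finset V)
    (y : Fin ℓ × Fin 2 → V) : ℝ :=
  (-1) ^ #(octahedron A y ∩ H)

noncomputable def octSum [Fintype V] (H : Finset (Finset V)) (a ℓ : ℕ) : ℝ :=
  ∑ x : Fin a → V, ∑ y : Fin ℓ × Fin 2 → V, octSign H (univ.image x) y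

lemma image_octTuple {n k ℓ : ℕ} (hℓk : ℓ ≤ k) (x : Fin (k - ℓ) → Fin n)
    (y : Fin ℓ × Fin 2 → Fin n) (ε : Fin ℓ → Fin 2) :
    univ.image (octTuple k ℓ x y ε) = univ.image x ∪ univ.image fun j => y (j, ε j) := by
  ext v
  simp only [mem_image, mem_union, mem_univ, true_and]
  constructor
  · rintro ⟨i, rfl⟩
    unfold octTuple
    split
    · exact Or.inl ⟨_, rfl⟩
    · exact Or.inr ⟨_, rfl⟩
  · rintro (⟨i, rfl⟩ | ⟨j, rfl⟩)
    · exact ⟨⟨i, by omega⟩, by simp [octTuple]⟩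
    · refine ⟨⟨j + (k - ℓ), by omega⟩, ?_⟩
      simp [octTuple]

lemma octSet_eq_filter_octahedron {n k ℓ : ℕ} (hℓk : ℓ ≤ k) (x : Fin (k - ℓ) → Fin n)
    (y : Fin ℓ × Fin 2 → Fin n) :
    octSet k ℓ x y = (octahedron (univ.image x) y).filter (·.card = k) := by
  simp only [octSet, octahedron, image_octTuple hℓk]

lemma devSum_eq_octSum {n k ℓ : ℕ} (hℓk : ℓ ≤ k) (H : Finset (Finset (Fin n))) :
    devSum k ℓ H = octSum (H.filter (·.card = k)) (k - ℓ) ℓ := by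
  simp only [devSum, octSum, octSign, octSet_eq_filter_octahedron hℓk, filter_inter,
    inter_filter]

lemma image_univ_cons {a : ℕ} (z : V) (x : Fin a → V) :
    univ.image (Fin.cons z x : Fin (a + 1) → V) = insert z (univ.image x) := by
  ext v
  simp [Fin.exists_fin_succ, eq_comm]

lemma sum_fun_fin_succ_image [Fintype V] {M : Type*} [AddCommMonoid M] {a : ℕ}
    (g : Finset V → M) :
    ∑ X : Fin (a + 1) → V, g (univ.image X) =
      ∑ x : Fin a → V, ∑ z, g (insert z (univ.image x)) := by
  rw [← (Fin.consEquiv fun _ => V).sum_comp, Fintype.sum_prod_type, sum_comm]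
  simp [Fin.consEquiv, image_univ_cons]

lemma octSum_succ_left [Fintype V] (H : Finset (Finset V)) (a ℓ : ℕ) :
    octSum H (a + 1) ℓ = ∑ x : Fin a → V, ∑ y : Fin ℓ × Fin 2 → V, ∑ z,
      octSign H (insert z (univ.image x)) y := by
  rw [octSum, sum_fun_fin_succ_image fun A => ∑ y : Fin ℓ × Fin 2 → V, octSign H A y]
  exact sum_congr rfl fun x _ => sum_comm

lemma image_consRow {m : ℕ} (z₀ z₁ : V) (y : Fin m × Fin 2 → V)
    (ε : Fin (m + 1) → Fin 2) :
    univ.image (fun j => consRow z₀ z₁ y (j, ε j)) =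
      insert (![z₀, z₁] (ε 0)) (univ.image fun j => y (j, ε j.succ)) := by
  rw [← image_univ_cons]
  congr 1
  ext j
  cases j using Fin.cases <;> rfl

lemma octahedron_consRow {m : ℕ} (A : Finset V) (z₀ z₁ : V) (y : Fin m × Fin 2 → V) :
    octahedron A (consRow z₀ z₁ y) =
      octahedron (insert z₀ A) y ∪ octahedron (insert z₁ A) y := by
  ext T
  simp [octahedron, image_consRow, Fin.exists_fin_succ_pi, Fin.exists_fin_two]

lemma subset_of_mem_octahedron {ℓ : ℕ} {A T : Finset V} {y : Fin ℓ × Fin 2 → V}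
    (hT : T ∈ octahedron A y) : T ⊆ A ∪ univ.image y := by
  obtain ⟨ε, -, rfl⟩ := mem_image.mp hT
  exact union_subset_union_right fun v hv => by
    obtain ⟨j, -, rfl⟩ := mem_image.mp hv
    exact mem_image_of_mem y (mem_univ _)

lemma mem_of_mem_octahedron_insert {ℓ : ℕ} {A T : Finset V} {z : V}
    {y : Fin ℓ × Fin 2 → V} (hT : T ∈ octahedron (insert z A) y) : z ∈ T := by
  obtain ⟨ε, -, rfl⟩ := mem_image.mp hT
  exact mem_union_left _ (mem_insert_self z A)

lemma disjoint_octahedron_insert {ℓ : ℕ} {A : Finset V} {z₀ z₁ : V}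
    {y : Fin ℓ × Fin 2 → V} (h : z₀ ∉ insert z₁ (A ∪ univ.image y)) :
    Disjoint (octahedron (insert z₀ A) y) (octahedron (insert z₁ A) y) := by
  refine disjoint_left.mpr fun T hT₀ hT₁ => h ?_
  have := subset_of_mem_octahedron hT₁ (mem_of_mem_octahedron_insert hT₀)
  rwa [insert_union] at this

variable (H : Finset (Finset V))

lemma abs_octSign {ℓ : ℕ} (A : Finset V) (y : Fin ℓ × Fin 2 → V) : |octSign H A y| = 1 :=
  abs_neg_one_pow _

lemma octSign_consRow {m : ℕ} {A : Finset V} {z₀ z₁ : V} {y : Fin m × Fin 2 → V}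
    (h : z₀ ∉ insert z₁ (A ∪ univ.image y)) :
    octSign H A (consRow z₀ z₁ y) =
      octSign H (insert z₀ A) y * octSign H (insert z₁ A) y := by
  have hdisj : Disjoint (octahedron (insert z₀ A) y ∩ H) (octahedron (insert z₁ A) y ∩ H) :=
    (disjoint_octahedron_insert h).mono inter_subset_left inter_subset_left
  rw [octSign, octahedron_consRow, union_inter_distrib_right, card_union_of_disjoint hdisj,
    pow_add, octSign, octSign]

lemma abs_octSign_mul_sub_octSign_consRow_le {m : ℕ} (A : Finset V) (z₀ z₁ : V)
    (y : Fin m × Fin 2 → V) :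
    |octSign H (insert z₀ A) y * octSign H (insert z₁ A) y -
        octSign H A (consRow z₀ z₁ y)| ≤
      if z₀ ∈ insert z₁ (A ∪ univ.image y) then 2 else 0 := by
  split_ifs with h
  · calc _ ≤ |octSign H (insert z₀ A) y * octSign H (insert z₁ A) y| +
          |octSign H A (consRow z₀ z₁ y)| := abs_sub _ _
      _ = 2 := by rw [abs_mul, abs_octSign, abs_octSign, abs_octSign]; norm_num
  · rw [octSign_consRow H h, sub_self, abs_zero]

lemma abs_sq_sum_octSign_sub_le [Fintype V] {m : ℕ} (A : Finset V)
    (y : Fin m × Fin 2 → V) :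
    |(∑ z, octSign H (insert z A) y) ^ 2 -
        ∑ z₀, ∑ z₁, octSign H A (consRow z₀ z₁ y)| ≤
      2 * (#(A ∪ univ.image y) + 1) * Fintype.card V := by
  rw [sq, sum_mul_sum, ← sum_sub_distrib]
  simp_rw [← sum_sub_distrib]
  calc _ ≤ ∑ z₀, ∑ z₁, |octSign H (insert z₀ A) y * octSign H (insert z₁ A) y -
          octSign H A (consRow z₀ z₁ y)| :=
        (abs_sum_le_sum_abs _ _).trans (sum_le_sum fun _ _ => abs_sum_le_sum_abs _ _)
    _ ≤ ∑ z₁ : V, ∑ z₀ : V,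
          if z₀ ∈ insert z₁ (A ∪ univ.image y) then (2 : ℝ) else 0 := by
        rw [sum_comm]
        gcongr with z₁ _ z₀ _
        exact abs_octSign_mul_sub_octSign_consRow_le H A z₀ z₁ y
    _ ≤ ∑ _z₁ : V, 2 * ((#(A ∪ univ.image y) : ℝ) + 1) := by
        gcongr with z₁ _
        rw [sum_ite_mem, univ_inter, sum_const, nsmul_eq_mul, mul_comm]
        gcongr
        exact_mod_cast card_insert_le _ _
    _ = _ := by rw [sum_const, card_univ, nsmul_eq_mul]; ring

lemma card_image_union_image_le {a m : ℕ} (x : Fin a → V) (y : Fin m × Fin 2 → V) :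
    #(univ.image x ∪ univ.image y) ≤ a + 2 * m := by
  refine (card_union_le _ _).trans
    (add_le_add (card_image_le.trans ?_) (card_image_le.trans ?_)) <;> simp [mul_comm]

lemma sq_octSum_succ_le [Fintype V] (a m : ℕ) :
    octSum H (a + 1) m ^ 2 ≤ (Fintype.card V : ℝ) ^ (a + 2 * m) *
      (|octSum H a (m + 1)| +
        2 * (a + 2 * m + 1) * (Fintype.card V : ℝ) ^ (a + 2 * m + 1)) := by
  set N : ℝ := (Fintype.card V : ℝ)
  have hcard :
      (Fintype.card ((Fin a → V) × (Fin m × Fin 2 → V)) : ℝ) = N ^ (a + 2 * m) := by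
    simp [N, pow_add, pow_mul, mul_comm]
  let S (p : (Fin a → V) × (Fin m × Fin 2 → V)) : ℝ :=
    ∑ z, octSign H (insert z (univ.image p.1)) p.2
  have hsplit_vertex : octSum H (a + 1) m = ∑ p, S p := by
    rw [octSum_succ_left, Fintype.sum_prod_type]
  have hsplit_row : octSum H a (m + 1) =
      ∑ p : (Fin a → V) × (Fin m × Fin 2 → V), ∑ z₀, ∑ z₁,
        octSign H (univ.image p.1) (consRow z₀ z₁ p.2) := by
    rw [octSum, Fintype.sum_prod_type]
    exact sum_congr rfl fun x _ => sum_consRow _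
  have herr : |∑ p, S p ^ 2 - octSum H a (m + 1)| ≤
      2 * (a + 2 * m + 1) * N ^ (a + 2 * m + 1) := by
    rw [hsplit_row, ← sum_sub_distrib]
    calc _ ≤ ∑ p, |S p ^ 2 -
            ∑ z₀, ∑ z₁, octSign H (univ.image p.1) (consRow z₀ z₁ p.2)| :=
          abs_sum_le_sum_abs _ _
      _ ≤ ∑ _p : (Fin a → V) × (Fin m × Fin 2 → V), 2 * ((a + 2 * m : ℕ) + 1) * N := by
          gcongr with p
          refine (abs_sq_sum_octSign_sub_le H _ _).trans ?_
          gcongr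
          exact_mod_cast card_image_union_image_le p.1 p.2
      _ = _ := by rw [sum_const, card_univ, nsmul_eq_mul, hcard]; push_cast; ring
  calc octSum H (a + 1) m ^ 2 ≤ N ^ (a + 2 * m) * ∑ p, S p ^ 2 := by
        simpa only [hsplit_vertex, card_univ, hcard] using
          sq_sum_le_card_mul_sum_sq (s := univ) (f := S)
    _ ≤ _ := by
        gcongr
        linarith [le_abs_self (octSum H a (m + 1)), (abs_le.mp herr).2]

lemma isLittleO_of_sq_le_mul_s15 {f g : ℕ → ℝ} {e : ℕ} {C : ℝ}
    (hg : g =o[atTop] fun n => (n : ℝ) ^ (e + 2))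
    (hfg : ∀ n, f n ^ 2 ≤ (n : ℝ) ^ e * (|g n| + C * (n : ℝ) ^ (e + 1))) :
    f =o[atTop] fun n => (n : ℝ) ^ (e + 1) := by
  refine IsLittleO.of_pow (n := 2) ?_ two_ne_zero
  have hbound :
      (f ^ 2) =O[atTop] fun n : ℕ => (n : ℝ) ^ e * |g n| + C * (n : ℝ) ^ (2 * e + 1) := by
    refine IsBigO.of_bound 1 (Eventually.of_forall fun n => ?_)
    rw [one_mul, Pi.pow_apply, Real.norm_eq_abs, abs_sq, Real.norm_eq_abs]
    refine (hfg n).trans (le_of_eq_of_le ?_ (le_abs_self _))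
    ring
  have hmain :
      (fun n : ℕ => (n : ℝ) ^ e * |g n|) =o[atTop] fun n : ℕ => (n : ℝ) ^ (2 * e + 2) :=
    ((isBigO_refl _ _).mul_isLittleO hg.abs_left).congr_right fun n => by ring
  have hrest :
      (fun n : ℕ => C * (n : ℝ) ^ (2 * e + 1)) =o[atTop]
        fun n : ℕ => (n : ℝ) ^ (2 * e + 2) :=
    ((isLittleO_pow_pow_atTop_of_lt (by omega)).comp_tendsto
      tendsto_natCast_atTop_atTop).const_mul_left C
  exact hbound.trans_isLittleO
    ((hmain.add hrest).congr_right fun n => by simp only [Pi.pow_apply]; ring)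

theorem dev_of_dev_succ {k m : ℕ} (hmk : m + 1 ≤ k) {H : HSeq} (h : Dev k (m + 1) H) :
    Dev k m H := by
  have hsucc (n : ℕ) : devSum k (m + 1) (H n) =
      octSum ((H n).filter (·.card = k)) (k - (m + 1)) (m + 1) :=
    devSum_eq_octSum hmk _
  have hpred (n : ℕ) : devSum k m (H n) =
      octSum ((H n).filter (·.card = k)) (k - (m + 1) + 1) m := by
    rw [devSum_eq_octSum (by omega), show k - m = k - (m + 1) + 1 by omega]
  rw [Dev, funext hsucc, show k + (m + 1) = k - (m + 1) + 2 * m + 2 by omega] at h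
  rw [Dev, funext hpred, show k + m = k - (m + 1) + 2 * m + 1 by omega]
  refine isLittleO_of_sq_le_mul_s15 (C := 2 * (((k - (m + 1) : ℕ) : ℝ) + 2 * m + 1)) h
    fun n => ?_
  simpa only [Fintype.card_fin] using sq_octSum_succ_le ((H n).filter (·.card = k)) _ m

theorem dev_implies_dev_pred_general (k ℓ : ℕ) (hℓk : ℓ ≤ k)
    (H : HSeq) (h : Dev k ℓ H) :
    Dev k (ℓ - 1) H := by
  cases ℓ with
  | zero => exact h
  | succ m => exact dev_of_dev_succ hℓk h

/-- `Dev(ℓ)` implies `Dev(ℓ-1)` for `3 ≤ ℓ ≤ k`. -/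
theorem dev_implies_dev_pred (k ℓ : ℕ) (hk : 2 ≤ k) (hℓ3 : 3 ≤ ℓ) (hℓk : ℓ ≤ k)
    (H : HSeq) (hH : UniformSeq k H) (h : Dev k ℓ H) :
    Dev k (ℓ - 1) H :=
  dev_implies_dev_pred_general k ℓ hℓk H h
end

section
/- Let k ≥ 2 and let 2 ≤ ℓ ≤ k. Then every hypergraph sequence of k-uniform hypergraphs satisfying Dev(ℓ) also satisfies CD_{1/2}(ℓ−1) (where CD_{1/2}(ℓ−1) is interpreted for ℓ−1 ≥ 1). -/
open Filter Finset Asymptotics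

/-! Let `s(T) = ±1` record whether `T ∈ H`, and `Φ_G(z) ∈ {0, 1}` whether every `(ℓ-1)`-subset of
the tuple `z` spans an edge of `G`. Up to `O(n^{k-1})` non-injective tuples, `∑_z s(z) Φ_G(z)` is
`k! (2|K_k(G) ∩ H| - |K_k(G)|)`. Split `z = (a, w)` with `w` the last `ℓ` coordinates: every
`(ℓ-1)`-set of coordinates misses a coordinate of `w`, so `Φ_G(a, w) = ∏_j u_j(a, w)` with `u_j`
independent of `w_j`. The Gowers–Cauchy–Schwarz inequality (one Cauchy–Schwarz step per coordinate
of `w`) removes the `u_j`: the `2^ℓ`-th power of the sum is at most `n^{k 2^ℓ - k - ℓ}` times the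
octahedral sum `∑ ∏_ε s(x, y_ε)`, which differs from the sum in `Dev(ℓ)` only on the
`O(n^{k+ℓ-1})` degenerate octahedra. -/

open scoped Nat

@[to_additive]
lemma Fin.prod_pi_succ {β M : Type*} [Fintype β] [CommMonoid M] {m : ℕ}
    (F : (Fin (m + 1) → β) → M) : ∏ w, F w = ∏ v, ∏ w' : Fin m → β, F (Fin.cons v w') := by
  rw [← (Fin.consEquiv fun _ => β).prod_comp, Fintype.prod_prod_type]
  rfl

section GowersCauchySchwarz

universe u

variable {V α : Type u} [Fintype V] [Fintype α] {m : ℕ}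

lemma abs_sum_mul_le_abs_sum_of_forall_eq {f g : V → ℝ} (hf : ∀ v v', f v = f v')
    (hf_le : ∀ v, |f v| ≤ 1) : |∑ v, f v * g v| ≤ |∑ v, g v| := by
  rcases isEmpty_or_nonempty V with _ | ⟨⟨v₀⟩⟩
  · simp
  · rw [Fintype.sum_congr (fun v => f v * g v) (fun v => f v₀ * g v) fun v => by rw [hf v v₀],
      ← Finset.mul_sum, abs_mul]
    exact mul_le_of_le_one_left (abs_nonneg _) (hf_le v₀)

def weightedSum (σ : α → (Fin m → V) → ℝ) (u : Fin m → α → (Fin m → V) → ℝ) : ℝ :=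
  ∑ a, ∑ w, σ a w * ∏ j, u j a w

def boxSum (σ : α → (Fin m → V) → ℝ) : ℝ :=
  ∑ a, ∑ y : Fin m → Fin 2 → V, ∏ ε : Fin m → Fin 2, σ a fun j => y j (ε j)

/-- Squaring the sum over the head coordinate doubles it: the new parameter `(a, p)` records the
two values `p 0`, `p 1` taken by that coordinate. -/
def doubleHead (f : α → (Fin (m + 1) → V) → ℝ) : α × (Fin 2 → V) → (Fin m → V) → ℝ :=
  fun p w => ∏ i, f p.1 (Fin.cons (p.2 i) w)

lemma boxSum_doubleHead (σ : α → (Fin (m + 1) → V) → ℝ) :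
    boxSum (doubleHead σ) = boxSum σ := by
  have hcons : ∀ (p : Fin 2 → V) (y : Fin m → Fin 2 → V) (i : Fin 2) (ε : Fin m → Fin 2),
      (fun j => (Fin.cons p y : Fin (m + 1) → Fin 2 → V) j ((Fin.cons i ε : Fin (m + 1) → Fin 2) j))
        = Fin.cons (p i) fun j => y j (ε j) := by
    intro p y i ε
    funext j
    cases j using Fin.cases <;> simp
  simp only [boxSum, doubleHead, Fintype.sum_prod_type]
  refine Fintype.sum_congr _ _ fun a => ?_
  rw [Fin.sum_pi_succ fun y : Fin (m + 1) → Fin 2 → V => ∏ ε : Fin (m + 1) → Fin 2,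
    σ a fun j => y j (ε j)]
  refine Fintype.sum_congr _ _ fun p => Fintype.sum_congr _ _ fun y => ?_
  rw [Fin.prod_pi_succ, Finset.prod_comm]
  simp only [hcons]

lemma sq_abs_weightedSum_le (σ : α → (Fin (m + 1) → V) → ℝ)
    (u : Fin (m + 1) → α → (Fin (m + 1) → V) → ℝ) (hu : ∀ a w, |u 0 a w| ≤ 1)
    (hind : ∀ a v v' w, u 0 a (Fin.cons v w) = u 0 a (Fin.cons v' w)) :
    |weightedSum σ u| ^ 2 ≤ Fintype.card α * Fintype.card V ^ m *
      weightedSum (doubleHead σ) fun j => doubleHead (u j.succ) := by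
  set g : α → (Fin m → V) → ℝ := fun a w =>
    ∑ v, σ a (Fin.cons v w) * ∏ j : Fin m, u j.succ a (Fin.cons v w)
  have hsplit : weightedSum σ u =
      ∑ aw : α × (Fin m → V), ∑ v, u 0 aw.1 (Fin.cons v aw.2) *
        (σ aw.1 (Fin.cons v aw.2) * ∏ j : Fin m, u j.succ aw.1 (Fin.cons v aw.2)) := by
    simp only [weightedSum, Fintype.sum_prod_type]
    refine Fintype.sum_congr _ _ fun a => ?_
    rw [Fin.sum_pi_succ, Finset.sum_comm]
    simp only [Fin.prod_univ_succ]
    refine Fintype.sum_congr _ _ fun w => Fintype.sum_congr _ _ fun v => by ring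
  have habs : |weightedSum σ u| ≤ ∑ aw : α × (Fin m → V), |g aw.1 aw.2| := by
    rw [hsplit]
    refine (Finset.abs_sum_le_sum_abs _ _).trans (Finset.sum_le_sum fun aw _ => ?_)
    exact abs_sum_mul_le_abs_sum_of_forall_eq (fun v v' => hind _ v v' _) fun v => hu _ _
  have hsq : ∀ a w, g a w ^ 2 = ∑ p : Fin 2 → V,
      doubleHead σ (a, p) w * ∏ j : Fin m, doubleHead (u j.succ) (a, p) w := by
    intro a w
    simp only [g, Fintype.sum_pow, doubleHead, Finset.prod_mul_distrib]
    exact Fintype.sum_congr _ _ fun p => congrArg _ Finset.prod_comm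
  calc |weightedSum σ u| ^ 2
      ≤ (∑ aw : α × (Fin m → V), |g aw.1 aw.2|) ^ 2 := pow_le_pow_left₀ (abs_nonneg _) habs 2
    _ ≤ Fintype.card α * Fintype.card V ^ m * ∑ aw : α × (Fin m → V), g aw.1 aw.2 ^ 2 := by
      refine sq_sum_le_card_mul_sum_sq.trans_eq ?_
      simp [Fintype.card_prod]
    _ = _ := by
      simp only [weightedSum, Fintype.sum_prod_type, hsq]
      exact congrArg _ (Fintype.sum_congr _ _ fun a => Finset.sum_comm)

/-- The Gowers–Cauchy–Schwarz inequality, with both sides multiplied out so that no exponent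
needs truncated subtraction. -/
theorem abs_weightedSum_pow_mul_le :
    ∀ {m : ℕ} {α : Type u} [Fintype α] (σ : α → (Fin m → V) → ℝ)
      (u : Fin m → α → (Fin m → V) → ℝ), (∀ j a w, |u j a w| ≤ 1) →
      (∀ j a w w', (∀ i, i ≠ j → w i = w' i) → u j a w = u j a w') →
      |weightedSum σ u| ^ 2 ^ m * (Fintype.card α * Fintype.card V ^ (2 * m)) ≤
        (Fintype.card α * Fintype.card V ^ m) ^ 2 ^ m * |boxSum σ|
  | 0, α, _, σ, u, _, _ => by
    have hbox : weightedSum σ u = boxSum σ := by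
      simp only [weightedSum, boxSum, Fintype.sum_unique, Fintype.prod_unique, Finset.univ_eq_empty,
        Finset.prod_empty, mul_one]
      exact Fintype.sum_congr _ _ fun a => congrArg (σ a) (Subsingleton.elim _ _)
    simp [hbox, mul_comm]
  | m + 1, α, _, σ, u, hu, hind => by
    have hIH := abs_weightedSum_pow_mul_le (doubleHead σ) (fun j => doubleHead (u j.succ))
      (fun j p w => by
        rw [doubleHead, Finset.abs_prod]
        exact Finset.prod_le_one (fun _ _ => abs_nonneg _) fun i _ => hu _ _ _)
      (fun j p w w' hw => by
        refine Fintype.prod_congr _ _ fun i => hind _ _ _ _ fun i' hi' => ?_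
        cases i' using Fin.cases with
        | zero => rfl
        | succ i' => exact hw i' fun h => hi' (h ▸ rfl))
    have hCS := sq_abs_weightedSum_le σ u (hu 0) fun a v v' w =>
      hind 0 a _ _ fun i hi => by
        cases i using Fin.cases with
        | zero => exact absurd rfl hi
        | succ i => rfl
    have hcard : (Fintype.card (α × (Fin 2 → V)) : ℝ) = Fintype.card α * Fintype.card V ^ 2 := by
      simp [Fintype.card_prod]
    rw [boxSum_doubleHead, hcard] at hIH
    set A : ℝ := (Fintype.card α : ℝ)
    set N : ℝ := (Fintype.card V : ℝ)
    set W := weightedSum (doubleHead σ) fun j => doubleHead (u j.succ)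
    calc |weightedSum σ u| ^ 2 ^ (m + 1) * (A * N ^ (2 * (m + 1)))
        = (|weightedSum σ u| ^ 2) ^ 2 ^ m * (A * N ^ (2 * (m + 1))) := by ring
      _ ≤ (A * N ^ m * |W|) ^ 2 ^ m * (A * N ^ (2 * (m + 1))) := by
        gcongr
        exact hCS.trans (mul_le_mul_of_nonneg_left (le_abs_self _) (by positivity))
      _ = (A * N ^ m) ^ 2 ^ m * (|W| ^ 2 ^ m * (A * N ^ 2 * N ^ (2 * m))) := by ring
      _ ≤ (A * N ^ m) ^ 2 ^ m * ((A * N ^ 2 * N ^ m) ^ 2 ^ m * |boxSum σ|) := by gcongr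
      _ = (A * N ^ (m + 1)) ^ 2 ^ (m + 1) * |boxSum σ| := by ring

end GowersCauchySchwarz

lemma Nat.pow_le_descFactorial_add (n : ℕ) :
    ∀ m : ℕ, n ^ m ≤ n.descFactorial m + m ^ 2 * n ^ (m - 1)
  | 0 => by simp
  | m + 1 => by
    have IH := Nat.pow_le_descFactorial_add n m
    have hdesc : n * n.descFactorial m ≤ n.descFactorial (m + 1) + m * n ^ m := by
      rw [Nat.descFactorial_succ]
      calc n * n.descFactorial m ≤ (n - m + m) * n.descFactorial m := by gcongr; omega
        _ = (n - m) * n.descFactorial m + m * n.descFactorial m := add_mul _ _ _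
        _ ≤ (n - m) * n.descFactorial m + m * n ^ m := by
          gcongr
          exact Nat.descFactorial_le_pow n m
    have hpow : m ^ 2 * (n * n ^ (m - 1)) ≤ m ^ 2 * n ^ m := by
      cases m with
      | zero => simp
      | succ m => rw [Nat.add_sub_cancel, ← pow_succ']
    calc n ^ (m + 1) = n * n ^ m := by ring
      _ ≤ n * (n.descFactorial m + m ^ 2 * n ^ (m - 1)) := Nat.mul_le_mul_left n IH
      _ = n * n.descFactorial m + m ^ 2 * (n * n ^ (m - 1)) := by ring
      _ ≤ n.descFactorial (m + 1) + m * n ^ m + m ^ 2 * n ^ m := by omega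
      _ ≤ n.descFactorial (m + 1) + (m + 1) ^ 2 * n ^ (m + 1 - 1) := by
        rw [Nat.add_sub_cancel]
        nlinarith [Nat.zero_le (n ^ m)]

section InjectiveTuples

variable {ι α : Type*} [Fintype ι] [DecidableEq ι] [Fintype α] [DecidableEq α]

lemma card_filter_not_injective_le :
    #{f : ι → α | ¬ Function.Injective f} ≤
      Fintype.card ι ^ 2 * Fintype.card α ^ (Fintype.card ι - 1) := by
  have hinj : #{f : ι → α | Function.Injective f} =
      (Fintype.card α).descFactorial (Fintype.card ι) := by
    rw [← Fintype.card_subtype, Fintype.card_congr (Equiv.subtypeInjectiveEquivEmbedding ι α),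
      Fintype.card_embedding_eq]
  have htotal := card_filter_add_card_filter_not (s := univ) fun f : ι → α => Function.Injective f
  rw [card_univ, Fintype.card_fun, hinj] at htotal
  have := Nat.pow_le_descFactorial_add (Fintype.card α) (Fintype.card ι)
  omega

lemma abs_sum_le_of_eq_zero_of_injective (F : (ι → α) → ℝ) {C : ℝ} (hC : 0 ≤ C)
    (hF : ∀ f, Function.Injective f → F f = 0) (hFC : ∀ f, |F f| ≤ C) :
    |∑ f, F f| ≤ C * (Fintype.card ι ^ 2 * Fintype.card α ^ (Fintype.card ι - 1)) := by
  rw [← sum_filter_of_ne (p := fun f => ¬ Function.Injective f) fun f _ hf hinj => hf (hF f hinj)]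
  calc |∑ f with ¬ Function.Injective f, F f|
      ≤ ∑ f with ¬ Function.Injective f, |F f| := abs_sum_le_sum_abs _ _
    _ ≤ #{f : ι → α | ¬ Function.Injective f} • C := sum_le_card_nsmul _ _ _ fun f _ => hFC f
    _ ≤ _ := by
      rw [nsmul_eq_mul, mul_comm]
      gcongr
      exact_mod_cast card_filter_not_injective_le

lemma card_filter_injective_image_eq {k : ℕ} {T : Finset α} (hT : #T = k) :
    #{z : Fin k → α | Function.Injective z ∧ univ.image z = T} = k ! := by
  let toEquiv : {z : Fin k → α // Function.Injective z ∧ univ.image z = T} ≃ (Fin k ≃ T) :=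
    { toFun := fun z => Equiv.ofBijective
        (fun i => ⟨z.1 i, z.2.2.subset (mem_image_of_mem _ (mem_univ i))⟩)
        ⟨fun i j h => z.2.1 (congrArg Subtype.val h), fun t => by
          obtain ⟨i, -, hi⟩ := mem_image.mp (z.2.2.symm.subset t.2)
          exact ⟨i, Subtype.ext hi⟩⟩
      invFun := fun e => ⟨fun i => e i, Subtype.val_injective.comp e.injective, by
        ext t
        simp only [mem_image, mem_univ, true_and]
        exact ⟨fun ⟨i, hi⟩ => hi ▸ (e i).2, fun ht => ⟨e.symm ⟨t, ht⟩, by simp⟩⟩⟩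
      left_inv := fun z => rfl
      right_inv := fun e => by ext; rfl }
  rw [← Fintype.card_subtype, Fintype.card_congr toEquiv,
    Fintype.card_equiv (T.equivFinOfCardEq hT).symm, Fintype.card_fin]

lemma sum_injective_eq_factorial_nsmul {M : Type*} [AddCommMonoid M] (k : ℕ)
    (F : Finset α → M) :
    ∑ z : Fin k → α with Function.Injective z, F (univ.image z) =
      k ! • ∑ T ∈ powersetCard k univ, F T := by
  rw [← sum_fiberwise_of_maps_to (t := powersetCard k univ) (g := fun z => univ.image z), smul_sum]
  · refine sum_congr rfl fun T hT => ?_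
    rw [sum_congr rfl fun z hz => by rw [(mem_filter.mp hz).2], sum_const, filter_filter,
      card_filter_injective_image_eq (mem_powersetCard.mp hT).2]
  · intro z hz
    refine mem_powersetCard.mpr ⟨subset_univ _, ?_⟩
    rw [card_image_of_injective _ (mem_filter.mp hz).2, card_univ, Fintype.card_fin]

end InjectiveTuples

section Cliques

variable {α : Type*} [DecidableEq α]

def edgeSign (H : Finset (Finset α)) (T : Finset α) : ℝ :=
  if T ∈ H then 1 else -1

lemma abs_edgeSign (H : Finset (Finset α)) (T : Finset α) : |edgeSign H T| = 1 := by
  unfold edgeSign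
  split_ifs <;> simp

lemma sum_edgeSign (A H : Finset (Finset α)) :
    ∑ T ∈ A, edgeSign H T = 2 * #(A ∩ H) - #A := by
  have h : ∀ T, edgeSign H T = 2 * (if T ∈ H then 1 else 0) - 1 := by
    intro T
    unfold edgeSign
    split_ifs <;> norm_num
  simp only [h, sum_sub_distrib, ← mul_sum, sum_boole, filter_mem_eq_inter, sum_const,
    nsmul_eq_mul, mul_one]

lemma prod_edgeSign_eq_neg_one_pow {β : Type*} [Fintype β] (hβ : Even (Fintype.card β))
    (H : Finset (Finset α)) {face : β → Finset α} (hface : Function.Injective face) :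
    ∏ b, edgeSign H (face b) = (-1) ^ #(univ.image face ∩ H) := by
  have hsplit := card_filter_add_card_filter_not (s := univ) fun b => face b ∈ H
  rw [card_univ] at hsplit
  rw [← filter_mem_eq_inter, filter_image, card_image_of_injective _ hface]
  simp only [edgeSign, prod_ite, prod_const_one, prod_const, one_mul]
  rw [neg_one_pow_eq_pow_mod_two, neg_one_pow_eq_pow_mod_two (#_)]
  obtain ⟨t, ht⟩ := hβ
  congr 1
  omega

lemma forall_image_mem_iff {k r : ℕ} {G : Finset (Finset α)} {z : Fin k → α}
    (hz : Function.Injective z) :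
    (∀ B : Finset (Fin k), #B = r → B.image z ∈ G) ↔
      ∀ S ∈ powersetCard r (univ.image z), S ∈ G := by
  simp only [mem_powersetCard]
  constructor
  · rintro h S ⟨hS, hSr⟩
    obtain ⟨B, -, rfl⟩ := subset_image_iff.mp hS
    exact h B (by rwa [card_image_of_injective _ hz] at hSr)
  · intro h B hB
    exact h _ ⟨image_subset_image (subset_univ B), by rw [card_image_of_injective _ hz, hB]⟩

variable [Fintype α]

def signedCliqueSum (k r : ℕ) (H G : Finset (Finset α)) : ℝ :=
  ∑ z : Fin k → α,
    edgeSign H (univ.image z) * if ∀ B : Finset (Fin k), #B = r → B.image z ∈ G then 1 else 0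

lemma two_mul_factorial_mul_abs_sub_le {n k r : ℕ} (H G : Finset (Finset (Fin n))) :
    2 * k ! * |#(cliqueSet k r G ∩ H) - (1 / 2 : ℝ) * #(cliqueSet k r G)| ≤
      |signedCliqueSum k r H G| + k ^ 2 * n ^ (k - 1) := by
  set term : (Fin k → Fin n) → ℝ := fun z =>
    edgeSign H (univ.image z) * if ∀ B : Finset (Fin k), #B = r → B.image z ∈ G then 1 else 0
  set ψ : Finset (Fin n) → ℝ := fun T =>
    if ∀ S ∈ powersetCard r T, S ∈ G then edgeSign H T else 0
  have hinj : ∑ z with Function.Injective z, term z =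
      2 * k ! * (#(cliqueSet k r G ∩ H) - (1 / 2 : ℝ) * #(cliqueSet k r G)) := by
    rw [sum_congr rfl fun z hz => (show term z = ψ (univ.image z) by
      simp only [term, ψ, mul_ite, mul_one, mul_zero, forall_image_mem_iff (mem_filter.mp hz).2]),
      sum_injective_eq_factorial_nsmul k ψ, ← sum_filter, ← cliqueSet, sum_edgeSign, nsmul_eq_mul]
    ring
  have hnoninj : |signedCliqueSum k r H G - ∑ z with Function.Injective z, term z| ≤
      k ^ 2 * n ^ (k - 1) := by
    rw [signedCliqueSum, ← sum_filter_add_sum_filter_not _ Function.Injective, add_sub_cancel_left,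
      sum_filter]
    refine (abs_sum_le_of_eq_zero_of_injective _ zero_le_one (fun z hz => if_neg (not_not.mpr hz))
      fun z => ?_).trans_eq (by simp only [Fintype.card_fin, one_mul])
    split_ifs <;> simp [abs_edgeSign]
  have htri := abs_sub_abs_le_abs_sub (∑ z with Function.Injective z, term z) (signedCliqueSum k r H G)
  rw [abs_sub_comm] at htri
  rw [← abs_of_pos (by positivity : (0 : ℝ) < 2 * k !), ← abs_mul, ← hinj]
  linarith

end Cliques

section Octahedra

variable {n k ℓ : ℕ}

def finSubSumEquiv (h : ℓ ≤ k) : Fin (k - ℓ) ⊕ Fin ℓ ≃ Fin k :=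
  finSumFinEquiv.trans (finCongr (Nat.sub_add_cancel h))

lemma octTuple_eq_comp (h : ℓ ≤ k) (x : Fin (k - ℓ) → Fin n) (y : Fin ℓ × Fin 2 → Fin n)
    (ε : Fin ℓ → Fin 2) :
    octTuple k ℓ x y ε = Sum.elim x (fun j => y (j, ε j)) ∘ (finSubSumEquiv h).symm := by
  funext i
  simp only [octTuple, Function.comp_apply]
  split_ifs with hi
  · rw [show (finSubSumEquiv h).symm i = .inl ⟨i, hi⟩ from
      (Equiv.symm_apply_eq _).mpr (Fin.ext (by simp [finSubSumEquiv]))]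
    rfl
  · rw [show (finSubSumEquiv h).symm i = .inr ⟨i - (k - ℓ), by omega⟩ from
      (Equiv.symm_apply_eq _).mpr (Fin.ext (by simp [finSubSumEquiv]; omega))]
    rfl

lemma injective_octTuple (h : ℓ ≤ k) {x : Fin (k - ℓ) → Fin n} {y : Fin ℓ × Fin 2 → Fin n}
    (hxy : Function.Injective (Sum.elim x y)) (ε : Fin ℓ → Fin 2) :
    Function.Injective (octTuple k ℓ x y ε) := by
  rw [octTuple_eq_comp h, show Sum.elim x (fun j => y (j, ε j)) =
    Sum.elim x y ∘ Sum.map id fun j => (j, ε j) from (Sum.elim_comp_map ..).symm]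
  exact (hxy.comp (Sum.map_injective.mpr ⟨Function.injective_id,
    fun j j' hj => congrArg Prod.fst hj⟩)).comp (Equiv.injective _)

lemma injective_image_octTuple (h : ℓ ≤ k) {x : Fin (k - ℓ) → Fin n}
    {y : Fin ℓ × Fin 2 → Fin n} (hxy : Function.Injective (Sum.elim x y)) :
    Function.Injective fun ε => univ.image (octTuple k ℓ x y ε) := by
  intro ε ε' (hεε' : univ.image (octTuple k ℓ x y ε) = univ.image (octTuple k ℓ x y ε'))
  funext j
  have hj : y (j, ε j) ∈ univ.image (octTuple k ℓ x y ε') := by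
    rw [← hεε', octTuple_eq_comp h]
    exact mem_image.mpr ⟨finSubSumEquiv h (.inr j), mem_univ _, by simp⟩
  obtain ⟨i, -, hi⟩ := mem_image.mp hj
  rw [octTuple_eq_comp h] at hi
  obtain ⟨t, rfl⟩ := (finSubSumEquiv h).surjective i
  rcases t with i | j'
  · exact absurd (hxy (a₁ := .inl i) (a₂ := .inr (j, ε j)) (by simpa using hi)) (by simp)
  · have := hxy (a₁ := .inr (j', ε' j')) (a₂ := .inr (j, ε j)) (by simpa using hi)
    simp only [Sum.inr.injEq, Prod.mk.injEq] at this
    obtain ⟨rfl, h'⟩ := this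
    exact h'.symm

def boxSignSum (k ℓ : ℕ) {n : ℕ} (H : Finset (Finset (Fin n))) : ℝ :=
  ∑ x : Fin (k - ℓ) → Fin n, ∑ y : Fin ℓ × Fin 2 → Fin n, ∏ ε : Fin ℓ → Fin 2,
    edgeSign H (univ.image (octTuple k ℓ x y ε))

/-- On a nondegenerate octahedron the `2^ℓ` faces are distinct `k`-sets, and an even number
of signs multiplies to the parity of the number of faces in `H`. -/
lemma prod_edgeSign_octTuple (h : ℓ ≤ k) (hℓ : 0 < ℓ) (H : Finset (Finset (Fin n)))
    {x : Fin (k - ℓ) → Fin n} {y : Fin ℓ × Fin 2 → Fin n}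
    (hxy : Function.Injective (Sum.elim x y)) :
    ∏ ε, edgeSign H (univ.image (octTuple k ℓ x y ε)) = (-1) ^ #(octSet k ℓ x y ∩ H) := by
  have hoct : octSet k ℓ x y = univ.image fun ε => univ.image (octTuple k ℓ x y ε) := by
    refine filter_true_of_mem fun T hT => ?_
    obtain ⟨ε, -, rfl⟩ := mem_image.mp hT
    rw [card_image_of_injective _ (injective_octTuple h hxy ε), card_univ, Fintype.card_fin]
  rw [hoct]
  refine prod_edgeSign_eq_neg_one_pow ?_ H (injective_image_octTuple h hxy)
  simpa using Nat.even_pow.mpr ⟨even_two, hℓ.ne'⟩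

lemma abs_boxSignSum_sub_devSum_le (h : ℓ ≤ k) (hℓ : 0 < ℓ) (H : Finset (Finset (Fin n))) :
    |boxSignSum k ℓ H - devSum k ℓ H| ≤ 2 * ((k + ℓ) ^ 2 * n ^ (k + ℓ - 1)) := by
  set d : (Fin (k - ℓ) → Fin n) → (Fin ℓ × Fin 2 → Fin n) → ℝ := fun x y =>
    ∏ ε, edgeSign H (univ.image (octTuple k ℓ x y ε)) - (-1) ^ #(octSet k ℓ x y ∩ H)
  have hsum : boxSignSum k ℓ H - devSum k ℓ H =
      ∑ F : Fin (k - ℓ) ⊕ Fin ℓ × Fin 2 → Fin n, d (F ∘ .inl) (F ∘ .inr) := by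
    refine Eq.trans ?_ ((Equiv.sumArrowEquivProdArrow _ _ _).sum_comp fun p => d p.1 p.2).symm
    rw [Fintype.sum_prod_type', boxSignSum, devSum, ← sum_sub_distrib]
    exact Fintype.sum_congr _ _ fun x => (sum_sub_distrib _ _).symm
  have hcard : Fintype.card (Fin (k - ℓ) ⊕ Fin ℓ × Fin 2) = k + ℓ := by
    simp only [Fintype.card_sum, Fintype.card_prod, Fintype.card_fin]
    omega
  rw [hsum]
  refine (abs_sum_le_of_eq_zero_of_injective _ zero_le_two (fun F hF => ?_) fun F => ?_).trans_eq
    (by rw [hcard, Fintype.card_fin]; push_cast; ring)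
  · rw [sub_eq_zero]
    exact prod_edgeSign_octTuple h hℓ H (by rwa [Sum.elim_comp_inl_inr])
  · refine (abs_sub _ _).trans ?_
    rw [abs_prod, abs_pow, abs_neg, abs_one, one_pow]
    simp only [abs_edgeSign, prod_const_one]
    norm_num

end Octahedra

section Splitting

/-- An `r`-set of indices misses some value of `c` when `r < |κ|`, so the conditions
indexed by `j` jointly cover all `r`-sets. -/
lemma prod_ite_forall_notMem {ι κ : Type*} [Fintype ι] [DecidableEq ι] [Fintype κ] {r : ℕ}
    (P : Finset ι → Prop) [DecidablePred P] {c : κ → ι} (hc : Function.Injective c)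
    (hr : r < Fintype.card κ) :
    (∏ j, if ∀ B : Finset ι, #B = r → c j ∉ B → P B then (1 : ℝ) else 0) =
      if ∀ B : Finset ι, #B = r → P B then 1 else 0 := by
  rw [Fintype.prod_boole]
  refine if_congr ⟨fun h B hB => ?_, fun h j B hB _ => h B hB⟩ rfl rfl
  obtain ⟨i, hi, hiB⟩ := exists_mem_notMem_of_card_lt_card (s := B) (t := univ.image c)
    (by rwa [card_image_of_injective _ hc, card_univ, hB])
  obtain ⟨j, -, rfl⟩ := mem_image.mp hi
  exact h j B hB hiB

variable {α : Type*} [DecidableEq α] {n k ℓ r : ℕ}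

def cliqueFactor (h : ℓ ≤ k) (r : ℕ) (G : Finset (Finset α)) (j : Fin ℓ)
    (a : Fin (k - ℓ) → α) (w : Fin ℓ → α) : ℝ :=
  if ∀ B : Finset (Fin k), #B = r → finSubSumEquiv h (.inr j) ∉ B →
      B.image (Sum.elim a w ∘ (finSubSumEquiv h).symm) ∈ G then 1 else 0

lemma abs_cliqueFactor_le (h : ℓ ≤ k) (G : Finset (Finset α)) (j : Fin ℓ)
    (a : Fin (k - ℓ) → α) (w : Fin ℓ → α) : |cliqueFactor h r G j a w| ≤ 1 := by
  unfold cliqueFactor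
  split_ifs <;> simp

lemma cliqueFactor_congr (h : ℓ ≤ k) (G : Finset (Finset α)) {j : Fin ℓ}
    (a : Fin (k - ℓ) → α) {w w' : Fin ℓ → α} (hw : ∀ i, i ≠ j → w i = w' i) :
    cliqueFactor h r G j a w = cliqueFactor h r G j a w' := by
  have himage : ∀ B : Finset (Fin k), finSubSumEquiv h (.inr j) ∉ B →
      B.image (Sum.elim a w ∘ (finSubSumEquiv h).symm) =
        B.image (Sum.elim a w' ∘ (finSubSumEquiv h).symm) := by
    refine fun B hB => image_congr fun i hi => ?_
    obtain ⟨t, rfl⟩ := (finSubSumEquiv h).surjective i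
    rcases t with i | i
    · simp
    · simpa using hw i (by rintro rfl; exact hB hi)
  unfold cliqueFactor
  exact if_congr (forall_congr' fun B => imp_congr_right fun _ =>
    forall_congr' fun hB => by rw [himage B hB]) rfl rfl

variable [Fintype α]

lemma signedCliqueSum_eq_weightedSum (h : ℓ ≤ k) (hr : r < ℓ) (H G : Finset (Finset α)) :
    signedCliqueSum k r H G =
      weightedSum (fun a w => edgeSign H (univ.image (Sum.elim a w ∘ (finSubSumEquiv h).symm)))
        (cliqueFactor h r G) := by
  rw [signedCliqueSum, weightedSum, ← Fintype.sum_prod_type',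
    ← ((Equiv.sumArrowEquivProdArrow _ _ α).symm.trans
      ((finSubSumEquiv h).arrowCongr (Equiv.refl α))).sum_comp]
  refine Fintype.sum_congr _ _ fun p => ?_
  simp only [cliqueFactor]
  rw [prod_ite_forall_notMem (c := fun j => finSubSumEquiv h (.inr j))
    (fun B => B.image (Sum.elim p.1 p.2 ∘ (finSubSumEquiv h).symm) ∈ G)
    ((finSubSumEquiv h).injective.comp Sum.inr_injective) (by simpa using hr)]
  rfl

lemma boxSum_eq_boxSignSum (h : ℓ ≤ k) (H : Finset (Finset (Fin n))) :
    boxSum (V := Fin n)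
        (fun a w => edgeSign H (univ.image (Sum.elim a w ∘ (finSubSumEquiv h).symm))) =
      boxSignSum k ℓ H := by
  refine Fintype.sum_congr _ _ fun x => ?_
  rw [← (Equiv.curry _ _ _).symm.sum_comp]
  simp only [octTuple_eq_comp h]
  rfl

lemma abs_signedCliqueSum_pow_mul_le (h : ℓ ≤ k) (hr : r < ℓ) (H G : Finset (Finset (Fin n))) :
    |signedCliqueSum k r H G| ^ 2 ^ ℓ * n ^ (k + ℓ) ≤
      n ^ (k * 2 ^ ℓ) * (|devSum k ℓ H| + 2 * ((k + ℓ) ^ 2 * n ^ (k + ℓ - 1))) := by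
  have hgcs := abs_weightedSum_pow_mul_le (V := Fin n)
    (fun a w => edgeSign H (univ.image (Sum.elim a w ∘ (finSubSumEquiv h).symm)))
    (cliqueFactor h r G) (fun j a w => abs_cliqueFactor_le h G j a w)
    fun j a w w' hw => cliqueFactor_congr h G a hw
  rw [← signedCliqueSum_eq_weightedSum h hr, boxSum_eq_boxSignSum] at hgcs
  have hbox : |boxSignSum k ℓ H| ≤ |devSum k ℓ H| + 2 * ((k + ℓ) ^ 2 * n ^ (k + ℓ - 1)) := by
    have := abs_boxSignSum_sub_devSum_le h (by omega) H
    have := abs_sub_abs_le_abs_sub (boxSignSum k ℓ H) (devSum k ℓ H)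
    linarith
  have hexp : (n : ℝ) ^ (k - ℓ) * (n : ℝ) ^ (2 * ℓ) = n ^ (k + ℓ) := by
    rw [← pow_add]
    congr 1
    omega
  have hexp' : ((n : ℝ) ^ (k - ℓ) * (n : ℝ) ^ ℓ) ^ 2 ^ ℓ = n ^ (k * 2 ^ ℓ) := by
    rw [← pow_add, ← pow_mul, Nat.sub_add_cancel h]
  simp only [Fintype.card_fun, Fintype.card_fin, Nat.cast_pow, hexp, hexp'] at hgcs
  exact hgcs.trans (by gcongr)

end Splitting

lemma exists_isLittleO_of_forall_eventually_le {β : Type*} {l : Filter β} {ι : β → Type*}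
    [∀ b, Finite (ι b)] (D : ∀ b, ι b → ℝ) (g : β → ℝ)
    (h : ∀ c > 0, ∀ᶠ b in l, ∀ i, |D b i| ≤ c * ‖g b‖) :
    ∃ f : β → ℝ, f =o[l] g ∧ ∀ b i, |D b i| ≤ f b := by
  refine ⟨fun b => ⨆ i, |D b i|, isLittleO_iff.mpr fun c hc => ?_,
    fun b i => le_ciSup (f := fun i => |D b i|) (Finite.bddAbove_range _) i⟩
  filter_upwards [h c hc] with b hb
  rw [Real.norm_of_nonneg (Real.iSup_nonneg fun i => abs_nonneg _)]
  exact Real.iSup_le hb (by positivity)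

lemma eventually_abs_le_of_pow_mul_le {ι : ℕ → Type*} {S : ∀ n, ι n → ℝ} {E : ℕ → ℝ}
    {a k q : ℕ} (hq : q ≠ 0) (hE : E =o[atTop] fun n => (n : ℝ) ^ a)
    (hS : ∀ n i, |S n i| ^ q * (n : ℝ) ^ a ≤ (n : ℝ) ^ (k * q) * E n) :
    ∀ c > 0, ∀ᶠ n in atTop, ∀ i, |S n i| ≤ c * n ^ k := by
  intro c hc
  filter_upwards [hE.def (pow_pos hc q), eventually_gt_atTop 0] with n hn hpos i
  have hna : (0 : ℝ) < n ^ a := by positivity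
  rw [Real.norm_of_nonneg hna.le] at hn
  refine (pow_le_pow_iff_left₀ (abs_nonneg _) (by positivity) hq).mp
    (le_of_mul_le_mul_right ?_ hna)
  calc |S n i| ^ q * n ^ a ≤ n ^ (k * q) * E n := hS n i
    _ ≤ n ^ (k * q) * (c ^ q * n ^ a) := by gcongr; exact (le_abs_self _).trans hn
    _ = (c * n ^ k) ^ q * n ^ a := by ring

lemma isLittleO_natCast_pow_pow {a b : ℕ} (hab : a < b) :
    (fun n : ℕ => (n : ℝ) ^ a) =o[atTop] fun n => (n : ℝ) ^ b :=
  (isLittleO_pow_pow_atTop_of_lt hab).comp_tendsto tendsto_natCast_atTop_atTop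

theorem dev_implies_cd_pred_general (k ℓ : ℕ) (hℓ2 : 2 ≤ ℓ) (hℓk : ℓ ≤ k)
    (H : HSeq) (h : Dev k ℓ H) :
    CD k (1/2 : ℝ) (ℓ - 1) H := by
  have hE : (fun n : ℕ => |devSum k ℓ (H n)| + 2 * ((k + ℓ) ^ 2 * (n : ℝ) ^ (k + ℓ - 1)))
      =o[atTop] fun n => (n : ℝ) ^ (k + ℓ) :=
    h.abs_left.add (((isLittleO_natCast_pow_pow (by omega)).const_mul_left _).const_mul_left _)
  have hS := eventually_abs_le_of_pow_mul_le (pow_ne_zero ℓ two_ne_zero) hE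
    fun n G => abs_signedCliqueSum_pow_mul_le (r := ℓ - 1) hℓk (by omega) (H n) G
  obtain ⟨f, hf, hfD⟩ := exists_isLittleO_of_forall_eventually_le
    (fun n (G : Finset (Finset (Fin n))) =>
      (#(cliqueSet k (ℓ - 1) G ∩ H n) : ℝ) - (1 / 2 : ℝ) * #(cliqueSet k (ℓ - 1) G))
    (fun n => (n : ℝ) ^ k) fun c hc => by
    have hc' : 0 < k ! * c := by positivity
    filter_upwards [hS _ hc', ((isLittleO_natCast_pow_pow (by omega : k - 1 < k)).const_mul_left
      ((k : ℝ) ^ 2)).def hc'] with n hSn hlow G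
    rw [Real.norm_of_nonneg (by positivity), Real.norm_of_nonneg (by positivity)] at hlow
    rw [Real.norm_of_nonneg (by positivity)]
    refine le_of_mul_le_mul_left ?_ (by positivity : (0 : ℝ) < 2 * k !)
    linarith [two_mul_factorial_mul_abs_sub_le (k := k) (r := ℓ - 1) (H n) G, hSn G]
  exact ⟨f, hf, fun n G _ => hfD n G⟩

/-- `Dev(ℓ)` implies `CD_{1/2}(ℓ-1)` for `2 ≤ ℓ ≤ k`. -/
theorem dev_implies_cd_pred (k ℓ : ℕ) (hk : 2 ≤ k) (hℓ2 : 2 ≤ ℓ) (hℓk : ℓ ≤ k)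
    (H : HSeq) (hH : UniformSeq k H) (h : Dev k ℓ H) :
    CD k (1/2 : ℝ) (ℓ - 1) H :=
  dev_implies_cd_pred_general k ℓ hℓ2 hℓk H h
end

section
/- Let k ≥ 3, let 0 < p < 1, and let 2 ≤ ℓ < k. Then every hypergraph sequence satisfying CD_p(ℓ, 1) also satisfies CD_p(ℓ, binom(k,ℓ)). -/
open Filter Finset Asymptotics

/-- `CD_p(ℓ, 1)` implies `CD_p(ℓ, C(k,ℓ))` for `2 ≤ ℓ < k`. -/
theorem cds_one_implies_cds_top (k ℓ : ℕ) (hk : 3 ≤ k) (hℓ2 : 2 ≤ ℓ) (hℓk : ℓ < k)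
    (p : ℝ) (hp0 : 0 < p) (hp1 : p < 1)
    (H : HSeq) (hH : UniformSeq k H) (h : CDs k p ℓ 1 H) :
    CDs k p ℓ (Nat.choose k ℓ) H := by
  classical
  obtain ⟨f, hf, hbd⟩ := h
  refine ⟨fun n => f n + f n, hf.add hf, ?_⟩
  intro n W G hG
  set Gfull := Finset.powersetCard ℓ (Finset.univ : Finset (Fin n)) with hGfull
  set Gc := Gfull \ G with hGc
  have hℓ1 : 1 ≤ ℓ := by omega
  have hℓk' : ℓ ≤ k := le_of_lt hℓk
  have hC1 : 1 ≤ Nat.choose k ℓ := Nat.choose_pos hℓk'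
  -- per-k-set facts
  have keyG : ∀ T : Finset (Fin n), T.card = k →
      G.filter (fun e => e ⊆ T) = Finset.powersetCard ℓ T ∩ G := by
    intro T hT
    ext e
    simp only [Finset.mem_filter, Finset.mem_inter, Finset.mem_powersetCard]
    constructor
    · rintro ⟨he, hsub⟩; exact ⟨⟨hsub, (hG e he).1⟩, he⟩
    · rintro ⟨⟨hsub, _⟩, he⟩; exact ⟨he, hsub⟩
  have keyCard : ∀ T : Finset (Fin n), T.card = k →
      (Finset.powersetCard ℓ T).card = Nat.choose k ℓ := by
    intro T hT; rw [Finset.card_powersetCard, hT]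
  have keyFull : ∀ T : Finset (Fin n), T.card = k →
      Gfull.filter (fun e => e ⊆ T) = Finset.powersetCard ℓ T := by
    intro T hT
    ext e
    simp only [hGfull, Finset.mem_filter, Finset.mem_powersetCard, Finset.subset_univ,
      true_and]
    tauto
  have keyC : ∀ T : Finset (Fin n), T.card = k →
      Gc.filter (fun e => e ⊆ T) = Finset.powersetCard ℓ T \ G := by
    intro T hT
    ext e
    simp only [hGc, hGfull, Finset.mem_filter, Finset.mem_sdiff, Finset.mem_powersetCard,
      Finset.subset_univ, true_and]
    tauto
  -- equivalence of predicates on k-sets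
  have keyIff : ∀ T : Finset (Fin n), T.card = k →
      (1 ≤ (Gc.filter (fun e => e ⊆ T)).card ↔
        ¬ Nat.choose k ℓ ≤ (G.filter (fun e => e ⊆ T)).card) := by
    intro T hT
    have h1 : (Finset.powersetCard ℓ T \ G).card + (Finset.powersetCard ℓ T ∩ G).card
        = Nat.choose k ℓ := by
      rw [Finset.card_sdiff_add_card_inter, keyCard T hT]
    rw [keyC T hT, keyG T hT]
    omega
  have keyFull1 : ∀ T : Finset (Fin n), T.card = k →
      1 ≤ (Gfull.filter (fun e => e ⊆ T)).card := by
    intro T hT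
    rw [keyFull T hT, keyCard T hT]
    exact hC1
  -- if all ℓ-subsets of T are in G then T ⊆ W
  have keySubW : ∀ T : Finset (Fin n), T.card = k →
      Nat.choose k ℓ ≤ (G.filter (fun e => e ⊆ T)).card → T ⊆ W := by
    intro T hT hc
    have hsub : Finset.powersetCard ℓ T ⊆ G := by
      have h2 : Finset.powersetCard ℓ T ∩ G = Finset.powersetCard ℓ T := by
        apply Finset.eq_of_subset_of_card_le Finset.inter_subset_left
        calc (Finset.powersetCard ℓ T).card = Nat.choose k ℓ := keyCard T hT
          _ ≤ (G.filter (fun e => e ⊆ T)).card := hc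
          _ = (Finset.powersetCard ℓ T ∩ G).card := by rw [keyG T hT]
      intro e he
      rw [← h2] at he
      exact (Finset.mem_inter.1 he).2
    intro v hv
    obtain ⟨S, hvS, hST, hScard⟩ := Finset.exists_subsuperset_card_eq
      (Finset.singleton_subset_iff.2 hv) (by simpa using hℓ1) (by omega)
    have hSG : S ∈ G := hsub (Finset.mem_powersetCard.2 ⟨hST, hScard⟩)
    exact (hG S hSG).2 (hvS (Finset.mem_singleton_self v))
  -- apply the hypothesis to Gfull and Gc
  have hGfullU : ∀ e ∈ Gfull, e.card = ℓ ∧ e ⊆ (Finset.univ : Finset (Fin n)) := by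
    intro e he
    exact ⟨(Finset.mem_powersetCard.1 he).2, Finset.subset_univ e⟩
  have hGcU : ∀ e ∈ Gc, e.card = ℓ ∧ e ⊆ (Finset.univ : Finset (Fin n)) := by
    intro e he
    exact hGfullU e (Finset.mem_sdiff.1 he).1
  have e1 := hbd n Finset.univ Gfull hGfullU
  have e2 := hbd n Finset.univ Gc hGcU
  -- counting identities
  have hX1 : ((H n).filter (fun T => 1 ≤ (Gfull.filter (fun e => e ⊆ T)).card)).card
      = ((H n).filter (fun T => Nat.choose k ℓ ≤ (G.filter (fun e => e ⊆ T)).card)).card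
        + ((H n).filter (fun T => 1 ≤ (Gc.filter (fun e => e ⊆ T)).card)).card := by
    rw [Finset.filter_true_of_mem (fun T hT => keyFull1 T (hH n T hT))]
    have : (H n).filter (fun T => 1 ≤ (Gc.filter (fun e => e ⊆ T)).card)
        = (H n).filter (fun T => ¬ Nat.choose k ℓ ≤ (G.filter (fun e => e ⊆ T)).card) := by
      apply Finset.filter_congr
      intro T hT
      simpa using keyIff T (hH n T hT)
    rw [this, Finset.card_filter_add_card_filter_not]
  have hYW : ((Finset.powersetCard k (Finset.univ : Finset (Fin n))).filter
        (fun T => Nat.choose k ℓ ≤ (G.filter (fun e => e ⊆ T)).card))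
      = ((Finset.powersetCard k W).filter
        (fun T => Nat.choose k ℓ ≤ (G.filter (fun e => e ⊆ T)).card)) := by
    ext T
    simp only [Finset.mem_filter, Finset.mem_powersetCard, Finset.subset_univ, true_and]
    constructor
    · rintro ⟨hTc, hc⟩; exact ⟨⟨keySubW T hTc hc, hTc⟩, hc⟩
    · rintro ⟨⟨_, hTc⟩, hc⟩; exact ⟨hTc, hc⟩
  have hY1 : ((Finset.powersetCard k (Finset.univ : Finset (Fin n))).filter
        (fun T => 1 ≤ (Gfull.filter (fun e => e ⊆ T)).card)).card
      = ((Finset.powersetCard k W).filter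
          (fun T => Nat.choose k ℓ ≤ (G.filter (fun e => e ⊆ T)).card)).card
        + ((Finset.powersetCard k (Finset.univ : Finset (Fin n))).filter
          (fun T => 1 ≤ (Gc.filter (fun e => e ⊆ T)).card)).card := by
    have hmem : ∀ T ∈ Finset.powersetCard k (Finset.univ : Finset (Fin n)), T.card = k :=
      fun T hT => (Finset.mem_powersetCard.1 hT).2
    rw [← hYW, Finset.filter_true_of_mem (fun T hT => keyFull1 T (hmem T hT))]
    have : (Finset.powersetCard k (Finset.univ : Finset (Fin n))).filter
          (fun T => 1 ≤ (Gc.filter (fun e => e ⊆ T)).card)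
        = (Finset.powersetCard k (Finset.univ : Finset (Fin n))).filter
          (fun T => ¬ Nat.choose k ℓ ≤ (G.filter (fun e => e ⊆ T)).card) := by
      apply Finset.filter_congr
      intro T hT
      simpa using keyIff T (hmem T hT)
    rw [this, Finset.card_filter_add_card_filter_not]
  -- final arithmetic
  have hsplit : (((H n).filter (fun T => Nat.choose k ℓ ≤
          (G.filter (fun e => e ⊆ T)).card)).card : ℝ)
        - p * (((Finset.powersetCard k W).filter (fun T => Nat.choose k ℓ ≤
          (G.filter (fun e => e ⊆ T)).card)).card : ℝ)
      = ((((H n).filter (fun T => 1 ≤ (Gfull.filter (fun e => e ⊆ T)).card)).card : ℝ)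
          - p * (((Finset.powersetCard k (Finset.univ : Finset (Fin n))).filter
            (fun T => 1 ≤ (Gfull.filter (fun e => e ⊆ T)).card)).card : ℝ))
        - ((((H n).filter (fun T => 1 ≤ (Gc.filter (fun e => e ⊆ T)).card)).card : ℝ)
          - p * (((Finset.powersetCard k (Finset.univ : Finset (Fin n))).filter
            (fun T => 1 ≤ (Gc.filter (fun e => e ⊆ T)).card)).card : ℝ)) := by
    rw [hX1, hY1]
    push_cast
    ring
  rw [hsplit]
  calc |_ - _| ≤ |_| + |_| := abs_sub _ _
    _ ≤ f n + f n := add_le_add e1 e2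
end
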